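/- arXiv:1708.07304 — 12 statements merged into one kernel-verified Lean document; each statement's English description precedes it below -/
import Mathlib

section
/- Let ε₁ > 0, ε₂ > 0 and let b ∈ ℝ satisfy 0 ≤ b and ε₂·b < 1. Then the entropy density h(r) = r·(log(r/(1 − ε₁ r − ε₂ b)) − 1) is strictly convex on the open interval I = (0, (1 − ε₂ b)/ε₁). -/
open Real Set

theorem ConvexOn.comp_const_sub_mul {s : Set ℝ} {f : ℝ → ℝ} (hf : ConvexOn ℝ s f) (c ε : ℝ) :
    ConvexOn ℝ {r | c - ε * r ∈ s} (fun r => f (c - ε * r)) :=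
  hf.comp_affineMap (AffineMap.const ℝ ℝ c - ε • AffineMap.id ℝ ℝ)

/-- Writing `r = (c - D) / ε` with `D = c - ε r` splits the function into
`ε⁻¹ · D log D + (c / ε) · (-log D)`, a sum of convex functions of `D`. -/
theorem convexOn_neg_mul_log_const_sub_mul {c ε : ℝ} (hc : 0 ≤ c) (hε : 0 < ε) :
    ConvexOn ℝ {r | 0 < c - ε * r} (fun r => -(r * log (c - ε * r))) := by
  have hMulLog : ConvexOn ℝ {r : ℝ | 0 < c - ε * r}
      (fun r => (c - ε * r) * log (c - ε * r)) :=
    (convexOn_mul_log.comp_const_sub_mul c ε).subset (fun r (hr : 0 < c - ε * r) => hr.le)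
      ((convex_Ioi 0).affine_preimage (AffineMap.const ℝ ℝ c - ε • AffineMap.id ℝ ℝ))
  have hNegLog : ConvexOn ℝ {r : ℝ | 0 < c - ε * r} (fun r => -log (c - ε * r)) :=
    strictConcaveOn_log_Ioi.concaveOn.neg.comp_const_sub_mul c ε
  refine ((hMulLog.smul (inv_nonneg.2 hε.le)).add (hNegLog.smul (div_nonneg hc hε.le))).congr ?_
  intro r _
  simp only [Pi.add_apply, smul_eq_mul]
  field_simp
  ring

theorem entropy_density_strictConvexOn_general
    (ε₁ ε₂ b : ℝ) (hε₁ : 0 < ε₁) (hbb : ε₂ * b < 1) :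
    StrictConvexOn ℝ (Set.Ioo (0 : ℝ) ((1 - ε₂ * b) / ε₁))
      (fun r : ℝ => r * (Real.log (r / (1 - ε₁ * r - ε₂ * b)) - 1)) := by
  set c := 1 - ε₂ * b
  have hI : Ioo 0 (c / ε₁) ⊆ {r | 0 < c - ε₁ * r} := fun r hr => by
    have := (lt_div_iff₀' hε₁).1 hr.2
    show 0 < c - ε₁ * r; linarith
  have hMulLog : StrictConvexOn ℝ (Ioo 0 (c / ε₁)) (fun r => r * log r) :=
    strictConvexOn_mul_log.subset (fun r hr => hr.1.le) (convex_Ioo _ _)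
  have hNegMulLog : ConvexOn ℝ (Ioo 0 (c / ε₁)) (fun r => -(r * log (c - ε₁ * r))) :=
    (convexOn_neg_mul_log_const_sub_mul (by linarith) hε₁).subset hI (convex_Ioo _ _)
  have hsum : StrictConvexOn ℝ (Ioo 0 (c / ε₁))
      (fun r => r * log r + -(r * log (c - ε₁ * r)) + -r) :=
    (hMulLog.add_convexOn hNegMulLog).add_convexOn (concaveOn_id (convex_Ioo _ _)).neg
  refine hsum.congr fun r hr => ?_
  have hD : 1 - ε₁ * r - ε₂ * b = c - ε₁ * r := by ring
  simp only [hD, log_div hr.1.ne' (hI hr).ne']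
  ring

/-- Strict convexity of the entropy density of the second entropy–mobility pair
(Lemma 4.3 of the paper). -/
theorem entropy_density_strictConvexOn
    (ε₁ ε₂ b : ℝ) (hε₁ : 0 < ε₁) (hε₂ : 0 < ε₂) (hb : 0 ≤ b) (hbb : ε₂ * b < 1) :
    StrictConvexOn ℝ (Set.Ioo (0 : ℝ) ((1 - ε₂ * b) / ε₁))
      (fun r : ℝ => r * (Real.log (r / (1 - ε₁ * r - ε₂ * b)) - 1)) :=
  entropy_density_strictConvexOn_general ε₁ ε₂ b hε₁ hbb
end

section
/- Let ε₁ > 0, ε₂ > 0 and let b ∈ ℝ satisfy 0 ≤ b and ε₂·b < 1. Then the entropy variable u₂(r) = log r − log(1 − ε₁ r − ε₂ b) + ε₁ r/(1 − ε₁ r − ε₂ b) is strictly increasing on I = (0, (1 − ε₂ b)/ε₁) and maps I bijectively onto ℝ; in particular u₂ has a strictly increasing inverse defined on all of ℝ with values in I. -/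
/-- The entropy variable u₂ of the second entropy–mobility pair is strictly increasing on
I = (0, (1-ε₂b)/ε₁) and maps I bijectively onto ℝ; in particular it has a strictly
increasing inverse defined on all of ℝ with values in I (Lemma 4.3 of the paper). -/
theorem entropy_variable_bijective
    (ε₁ ε₂ b : ℝ) (hε₁ : 0 < ε₁) (hε₂ : 0 < ε₂) (hb : 0 ≤ b) (hbb : ε₂ * b < 1) :
    StrictMonoOn
      (fun r : ℝ =>
        Real.log r - Real.log (1 - ε₁ * r - ε₂ * b) + ε₁ * r / (1 - ε₁ * r - ε₂ * b))
      (Set.Ioo (0 : ℝ) ((1 - ε₂ * b) / ε₁)) ∧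
    Set.BijOn
      (fun r : ℝ =>
        Real.log r - Real.log (1 - ε₁ * r - ε₂ * b) + ε₁ * r / (1 - ε₁ * r - ε₂ * b))
      (Set.Ioo (0 : ℝ) ((1 - ε₂ * b) / ε₁)) Set.univ ∧
    ∃ v : ℝ → ℝ, StrictMono v ∧
      (∀ y : ℝ, v y ∈ Set.Ioo (0 : ℝ) ((1 - ε₂ * b) / ε₁)) ∧
      (∀ r ∈ Set.Ioo (0 : ℝ) ((1 - ε₂ * b) / ε₁),
        v (Real.log r - Real.log (1 - ε₁ * r - ε₂ * b) + ε₁ * r / (1 - ε₁ * r - ε₂ * b)) = r) ∧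
      (∀ y : ℝ,
        Real.log (v y) - Real.log (1 - ε₁ * v y - ε₂ * b)
          + ε₁ * v y / (1 - ε₁ * v y - ε₂ * b) = y) := by
  set c : ℝ := 1 - ε₂ * b with hc
  have hc0 : 0 < c := by simp [hc]; linarith
  set f : ℝ → ℝ := fun r : ℝ =>
    Real.log r - Real.log (1 - ε₁ * r - ε₂ * b) + ε₁ * r / (1 - ε₁ * r - ε₂ * b) with hf
  set I : Set ℝ := Set.Ioo (0 : ℝ) (c / ε₁) with hI
  have hD : ∀ r ∈ I, 0 < 1 - ε₁ * r - ε₂ * b := by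
    intro r hr
    have : ε₁ * r < c := by
      have := (lt_div_iff₀ hε₁).mp hr.2
      linarith
    linarith
  -- strict monotonicity
  have hmono : StrictMonoOn f I := by
    intro x hx y hy hxy
    have hDx := hD x hx
    have hDy := hD y hy
    have h1 : Real.log x < Real.log y := Real.log_lt_log hx.1 hxy
    have h2 : Real.log (1 - ε₁ * y - ε₂ * b) < Real.log (1 - ε₁ * x - ε₂ * b) := by
      apply Real.log_lt_log hDy
      nlinarith
    have h3 : ε₁ * x / (1 - ε₁ * x - ε₂ * b) < ε₁ * y / (1 - ε₁ * y - ε₂ * b) := by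
      have hxy' : ε₁ * x < ε₁ * y := by nlinarith
      have hA : ε₁ * x / (1 - ε₁ * x - ε₂ * b) < ε₁ * y / (1 - ε₁ * x - ε₂ * b) :=
        (div_lt_div_iff_of_pos_right hDx).mpr hxy'
      have hB : ε₁ * y / (1 - ε₁ * x - ε₂ * b) ≤ ε₁ * y / (1 - ε₁ * y - ε₂ * b) := by
        gcongr <;> nlinarith [hy.1]
      linarith
    simp only [hf]
    linarith
  -- continuity
  have hcont : ContinuousOn f I := by
    intro x hx
    have hDx := (hD x hx).ne'
    apply ContinuousAt.continuousWithinAt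
    have h2 : ContinuousAt (fun r : ℝ => Real.log (1 - ε₁ * r - ε₂ * b)) x :=
      ContinuousAt.comp (g := Real.log) (f := fun r : ℝ => 1 - ε₁ * r - ε₂ * b) (Real.continuousAt_log hDx) (by fun_prop)
    have h3 : ContinuousAt (fun r : ℝ => ε₁ * r / (1 - ε₁ * r - ε₂ * b)) x :=
      ContinuousAt.div (by fun_prop) (by fun_prop) hDx
    exact (((Real.continuousAt_log hx.1.ne').sub h2).add h3)
  -- surjectivity
  have hsurj : ∀ y : ℝ, ∃ r ∈ I, f r = y := by
    intro y
    -- small point a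
    set C : ℝ := Real.log (2 / c) + 1 with hC
    set a : ℝ := min (Real.exp (y - C - 1)) (c / (2 * ε₁)) with ha
    have ha0 : 0 < a := lt_min (Real.exp_pos _) (by positivity)
    have haI : a ∈ I := by
      constructor
      · exact ha0
      · calc a ≤ c / (2 * ε₁) := min_le_right _ _
          _ < c / ε₁ := by
            apply div_lt_div_of_pos_left hc0 hε₁
            linarith
    have hDa := hD a haI
    have hDa2 : c / 2 ≤ 1 - ε₁ * a - ε₂ * b := by
      have : ε₁ * a ≤ ε₁ * (c / (2 * ε₁)) := by
        apply mul_le_mul_of_nonneg_left (min_le_right _ _) hε₁.le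
      have he : ε₁ * (c / (2 * ε₁)) = c / 2 := by field_simp
      simp [hc]
      linarith [he ▸ this]
    have hfa : f a < y := by
      have h1 : Real.log a ≤ y - C - 1 := by
        calc Real.log a ≤ Real.log (Real.exp (y - C - 1)) :=
              Real.log_le_log ha0 (min_le_left _ _)
          _ = y - C - 1 := Real.log_exp _
      have h2 : -Real.log (1 - ε₁ * a - ε₂ * b) ≤ Real.log (2 / c) := by
        rw [Real.log_div (by norm_num) hc0.ne', neg_le, neg_sub]
        have : Real.log (c / 2) ≤ Real.log (1 - ε₁ * a - ε₂ * b) :=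
          Real.log_le_log (by positivity) hDa2
        rw [Real.log_div hc0.ne' (by norm_num)] at this
        linarith
      have h3 : ε₁ * a / (1 - ε₁ * a - ε₂ * b) ≤ 1 := by
        rw [div_le_one hDa]
        have : ε₁ * a ≤ ε₁ * (c / (2 * ε₁)) :=
          mul_le_mul_of_nonneg_left (min_le_right _ _) hε₁.le
        have he : ε₁ * (c / (2 * ε₁)) = c / 2 := by field_simp
        linarith [he ▸ this]
      simp only [hf, hC] at *
      linarith
    -- large point b'
    set L : ℝ := Real.log (c / (2 * ε₁)) with hL
    set δ : ℝ := min (Real.exp (L - y - 1) / ε₁) (c / (2 * ε₁)) with hδ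
    have hδ0 : 0 < δ := lt_min (by positivity) (by positivity)
    set r : ℝ := c / ε₁ - δ with hr
    have hrI : r ∈ I := by
      constructor
      · have : δ ≤ c / (2 * ε₁) := min_le_right _ _
        have : c / (2 * ε₁) < c / ε₁ := div_lt_div_of_pos_left hc0 hε₁ (by linarith)
        simp [hr]
        linarith [min_le_right (Real.exp (L - y - 1) / ε₁) (c / (2 * ε₁))]
      · simp [hr]; linarith
    have hDr : 1 - ε₁ * r - ε₂ * b = ε₁ * δ := by
      simp [hr, hc]
      field_simp
      ring
    have hrge : c / (2 * ε₁) ≤ r := by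
      have h1 : δ ≤ c / (2 * ε₁) := min_le_right _ _
      have : c / ε₁ - c / (2 * ε₁) = c / (2 * ε₁) := by field_simp; ring
      simp only [hr]
      linarith
    have hfr : y < f r := by
      have h1 : L ≤ Real.log r :=
        Real.log_le_log (div_pos hc0 (by positivity)) hrge
      have h2 : Real.log (1 - ε₁ * r - ε₂ * b) ≤ L - y - 1 := by
        rw [hDr]
        calc Real.log (ε₁ * δ) ≤ Real.log (ε₁ * (Real.exp (L - y - 1) / ε₁)) := by
              apply Real.log_le_log (mul_pos hε₁ hδ0)
              exact mul_le_mul_of_nonneg_left (min_le_left _ _) hε₁.le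
          _ = L - y - 1 := by
              rw [mul_div_cancel₀ _ hε₁.ne']
              exact Real.log_exp _
      have h3 : 0 ≤ ε₁ * r / (1 - ε₁ * r - ε₂ * b) := by
        apply le_of_lt
        apply div_pos (mul_pos hε₁ hrI.1) (hD r hrI)
      simp only [hf]
      linarith
    -- IVT
    have hab : a ≤ r := le_trans (min_le_right _ _) hrge
    have hIcc : Set.Icc a r ⊆ I := by
      intro t ht
      exact ⟨lt_of_lt_of_le ha0 ht.1, lt_of_le_of_lt ht.2 hrI.2⟩
    have : y ∈ Set.Icc (f a) (f r) := ⟨hfa.le, hfr.le⟩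
    have := intermediate_value_Icc hab (hcont.mono hIcc) this
    obtain ⟨t, htmem, hteq⟩ := this
    exact ⟨t, hIcc htmem, hteq⟩
  choose v hvI hvf using hsurj
  have hvmono : StrictMono v := by
    intro y₁ y₂ hy
    by_contra h
    push_neg at h
    rcases eq_or_lt_of_le h with h | h
    · rw [← hvf y₁, ← hvf y₂, h] at hy
      exact lt_irrefl _ hy
    · have := hmono (hvI y₂) (hvI y₁) h
      rw [hvf y₁, hvf y₂] at this
      exact absurd hy (not_lt.mpr this.le)
  have hleft : ∀ r ∈ I, v (f r) = r := by
    intro r hr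
    have := hvf (f r)
    exact hmono.injOn (hvI (f r)) hr this
  refine ⟨hmono, ⟨fun _ _ => trivial, hmono.injOn, fun y _ => ⟨v y, hvI y, hvf y⟩⟩,
    v, hvmono, hvI, hleft, hvf⟩
end

section
/- Let ε₁ > 0, ε₂ > 0 and let b ∈ ℝ satisfy 0 ≤ b and ε₂·b < 1. For every r in I = (0, (1 − ε₂ b)/ε₁) one has 1/r + 2ε₁/(1 − ε₁ r − ε₂ b) + ε₁² r/(1 − ε₁ r − ε₂ b)² ≥ 2ε₁; consequently the reciprocal of the second derivative of the entropy density, 1/h''(r), satisfies 0 < 1/h''(r) ≤ 1/(2ε₁) uniformly on I. -/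
/-- Uniform lower bound h''(r) ≥ 2ε₁ on I, and the resulting uniform bound
0 < 1/h''(r) ≤ 1/(2ε₁) for the reciprocal of the second derivative of the entropy
density of the second entropy–mobility pair (Lemma 4.3 of the paper). -/
theorem entropy_density_second_deriv_bound
    (ε₁ ε₂ b : ℝ) (hε₁ : 0 < ε₁) (hε₂ : 0 < ε₂) (hb : 0 ≤ b) (hbb : ε₂ * b < 1) :
    ∀ r ∈ Set.Ioo (0 : ℝ) ((1 - ε₂ * b) / ε₁),
      2 * ε₁ ≤ 1 / r + 2 * ε₁ / (1 - ε₁ * r - ε₂ * b)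
          + ε₁ ^ 2 * r / (1 - ε₁ * r - ε₂ * b) ^ 2 ∧
      0 < 1 / (1 / r + 2 * ε₁ / (1 - ε₁ * r - ε₂ * b)
          + ε₁ ^ 2 * r / (1 - ε₁ * r - ε₂ * b) ^ 2) ∧
      1 / (1 / r + 2 * ε₁ / (1 - ε₁ * r - ε₂ * b)
          + ε₁ ^ 2 * r / (1 - ε₁ * r - ε₂ * b) ^ 2) ≤ 1 / (2 * ε₁) := by
  rintro r ⟨hr0, hr1⟩
  have hd : 0 < 1 - ε₁ * r - ε₂ * b := by
    have := (lt_div_iff₀ hε₁).mp hr1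
    linarith [mul_comm r ε₁]
  have hd1 : 1 - ε₁ * r - ε₂ * b < 1 := by
    nlinarith [mul_pos hε₁ hr0, mul_nonneg hε₂.le hb]
  have h1 : 0 < 1 / r := by positivity
  have h3 : 0 < ε₁ ^ 2 * r / (1 - ε₁ * r - ε₂ * b) ^ 2 := by positivity
  have h2 : 2 * ε₁ ≤ 2 * ε₁ / (1 - ε₁ * r - ε₂ * b) := by
    rw [le_div_iff₀ hd]
    nlinarith
  have hmain : 2 * ε₁ ≤ 1 / r + 2 * ε₁ / (1 - ε₁ * r - ε₂ * b)
      + ε₁ ^ 2 * r / (1 - ε₁ * r - ε₂ * b) ^ 2 := by linarith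
  have hpos : 0 < 1 / r + 2 * ε₁ / (1 - ε₁ * r - ε₂ * b)
      + ε₁ ^ 2 * r / (1 - ε₁ * r - ε₂ * b) ^ 2 := lt_of_lt_of_le (by positivity) hmain
  exact ⟨hmain, by positivity, one_div_le_one_div_of_le (by positivity) hmain⟩
end

section
/- Let ε₁, ε₂ > 0, c₁ ∈ (0,1], and let b, r ∈ ℝ satisfy b ≥ 0, c₁ ≤ 1 − ε₂ b ≤ 1, r > 0 and ε₁ r + ε₂ b < 1. Let d ≥ 1 and p, q ∈ ℝᵈ, set D = 1 − ε₁ r − ε₂ b and w = ((1 − ε₂ b)/D²)·((1 − ε₂ b)·p/r + ε₂ q) ∈ ℝᵈ. Then r·D·‖w‖² ≥ (c₁⁴/2)·‖p‖²/r − (ε₂²/ε₁)·‖q‖². -/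
lemma diss_aux (ε₁ ε₂ c₁ β D r a c : ℝ)
    (hε₁ : 0 < ε₁) (hε₂ : 0 < ε₂) (hc₁ : 0 < c₁) (hc₁' : c₁ ≤ 1)
    (hβ : c₁ ≤ β) (hβ1 : β ≤ 1) (hD : 0 < D) (hr : 0 < r)
    (hrel : ε₁ * r = β - D) (ha : 0 ≤ a) (hc : 0 ≤ c) :
    ε₁ * c₁ ^ 4 / 2 * a ^ 2 * D ^ 3 - ε₂ ^ 2 * r * c ^ 2 * D ^ 3
      ≤ ε₁ * β ^ 2 * (β * a - ε₂ * r * c) ^ 2 := by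
  have hβ0 : 0 < β := lt_of_lt_of_le hc₁ hβ
  have hMN : 0 < r * (ε₁ * r * β ^ 2 + D ^ 3) := by positivity
  have hDβ : D ≤ β := by nlinarith
  have hbound : ε₁ * r * β ^ 2 + D ^ 3 ≤ 2 * β ^ 3 := by
    have h1 : ε₁ * r * β ^ 2 ≤ β ^ 3 := by nlinarith
    have h2 : D ^ 3 ≤ β ^ 3 := pow_le_pow_left₀ hD.le hDβ 3
    linarith
  have hcβ : c₁ ^ 4 ≤ β := by
    have h1 : c₁ ^ 4 ≤ c₁ ^ 1 := pow_le_pow_of_le_one hc₁.le hc₁' (by norm_num)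
    rw [pow_one] at h1; linarith
  have step1 : ε₁ * r * β ^ 2 * D ^ 3 * (β * a) ^ 2
        - D ^ 3 * (ε₁ * r * β ^ 2 + D ^ 3) * (ε₂ * r * c) ^ 2
      ≤ ε₁ * r * β ^ 2 * (ε₁ * r * β ^ 2 + D ^ 3) * (β * a - ε₂ * r * c) ^ 2 := by
    nlinarith [sq_nonneg (ε₁ * r * β ^ 2 * (β * a) - (ε₁ * r * β ^ 2 + D ^ 3) * (ε₂ * r * c))]
  have step2 : ε₁ * c₁ ^ 4 / 2 * a ^ 2 * D ^ 3 * (r * (ε₁ * r * β ^ 2 + D ^ 3))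
      ≤ ε₁ * r * β ^ 2 * D ^ 3 * (β * a) ^ 2 := by
    have key : c₁ ^ 4 * (ε₁ * r * β ^ 2 + D ^ 3) ≤ β * (2 * β ^ 3) :=
      mul_le_mul hcβ hbound (by positivity) hβ0.le
    have h2 : ε₁ * r * D ^ 3 * a ^ 2 * (c₁ ^ 4 * (ε₁ * r * β ^ 2 + D ^ 3))
        ≤ ε₁ * r * D ^ 3 * a ^ 2 * (β * (2 * β ^ 3)) :=
      mul_le_mul_of_nonneg_left key (by positivity)
    nlinarith [h2]
  have hfin : (ε₁ * c₁ ^ 4 / 2 * a ^ 2 * D ^ 3 - ε₂ ^ 2 * r * c ^ 2 * D ^ 3)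
        * (r * (ε₁ * r * β ^ 2 + D ^ 3))
      ≤ ε₁ * β ^ 2 * (β * a - ε₂ * r * c) ^ 2 * (r * (ε₁ * r * β ^ 2 + D ^ 3)) := by
    nlinarith [step1, step2]
  exact le_of_mul_le_mul_right hfin hMN

/-- Pointwise form of the entropy dissipation estimate of Lemma 4.4 of the paper:
with D = 1 - ε₁r - ε₂b, m₂(r) = rD and w the gradient of the entropy variable u₂,
one has m₂(r)‖w‖² ≥ (c₁⁴/2)‖p‖²/r - (ε₂²/ε₁)‖q‖². -/
theorem dissipation_estimate_pair2
    (ε₁ ε₂ c₁ b r : ℝ) (hε₁ : 0 < ε₁) (hε₂ : 0 < ε₂)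
    (hc₁ : 0 < c₁) (hc₁' : c₁ ≤ 1)
    (hb : 0 ≤ b) (hlb : c₁ ≤ 1 - ε₂ * b) (hub : 1 - ε₂ * b ≤ 1)
    (hr : 0 < r) (hS : ε₁ * r + ε₂ * b < 1)
    (d : ℕ) (hd : 1 ≤ d) (p q : EuclideanSpace ℝ (Fin d)) :
    r * (1 - ε₁ * r - ε₂ * b) *
        ‖((1 - ε₂ * b) / (1 - ε₁ * r - ε₂ * b) ^ 2) •
          (((1 - ε₂ * b) / r) • p + ε₂ • q)‖ ^ 2
      ≥ c₁ ^ 4 / 2 * ‖p‖ ^ 2 / r - ε₂ ^ 2 / ε₁ * ‖q‖ ^ 2 := by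
  set β : ℝ := 1 - ε₂ * b with hβdef
  set D : ℝ := 1 - ε₁ * r - ε₂ * b with hDdef
  have hD : 0 < D := by simp only [hDdef]; linarith
  have hβ0 : 0 < β := lt_of_lt_of_le hc₁ hlb
  set a : ℝ := ‖p‖ with hadef
  set c : ℝ := ‖q‖ with hcdef
  have ha : 0 ≤ a := norm_nonneg p
  have hc : 0 ≤ c := norm_nonneg q
  set v : EuclideanSpace ℝ (Fin d) := (β / r) • p + ε₂ • q with hvdef
  -- norm of the scalar multiple
  have hsm : ‖(β / D ^ 2) • v‖ ^ 2 = (β / D ^ 2) ^ 2 * ‖v‖ ^ 2 := by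
    rw [norm_smul, Real.norm_eq_abs, mul_pow, sq_abs]
  -- lower bound on ‖v‖²
  have hv2 : ((β / r) * a - ε₂ * c) ^ 2 ≤ ‖v‖ ^ 2 := by
    have h1 : |‖(β / r) • p‖ - ‖ε₂ • q‖| ≤ ‖v‖ := by
      have := abs_norm_sub_norm_le ((β / r) • p) (-(ε₂ • q))
      simpa [hvdef, sub_neg_eq_add] using this
    have h2 : ‖(β / r) • p‖ = (β / r) * a := by
      rw [norm_smul, Real.norm_eq_abs, abs_of_pos (by positivity)]
    have h3 : ‖ε₂ • q‖ = ε₂ * c := by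
      rw [norm_smul, Real.norm_eq_abs, abs_of_pos hε₂]
    calc ((β / r) * a - ε₂ * c) ^ 2 = |‖(β / r) • p‖ - ‖ε₂ • q‖| ^ 2 := by
          rw [h2, h3, sq_abs]
      _ ≤ ‖v‖ ^ 2 := pow_le_pow_left₀ (abs_nonneg _) h1 2
  have haux := diss_aux ε₁ ε₂ c₁ β D r a c hε₁ hε₂ hc₁ hc₁' hlb hub hD hr
    (by rw [hβdef, hDdef]; ring) ha hc
  have hchain : r * D * ((β / D ^ 2) ^ 2 * (((β / r) * a - ε₂ * c) ^ 2))
      ≤ r * D * ((β / D ^ 2) ^ 2 * ‖v‖ ^ 2) :=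
    mul_le_mul_of_nonneg_left (mul_le_mul_of_nonneg_left hv2 (by positivity)) (by positivity)
  rw [ge_iff_le, hsm]
  refine le_trans ?_ hchain
  rw [← sub_nonneg]
  have hkey : r * D * ((β / D ^ 2) ^ 2 * ((β / r * a - ε₂ * c) ^ 2))
        - (c₁ ^ 4 / 2 * a ^ 2 / r - ε₂ ^ 2 / ε₁ * c ^ 2)
      = (ε₁ * β ^ 2 * (β * a - ε₂ * r * c) ^ 2
          - (ε₁ * c₁ ^ 4 / 2 * a ^ 2 * D ^ 3 - ε₂ ^ 2 * r * c ^ 2 * D ^ 3))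
        / (ε₁ * D ^ 3 * r) := by
    field_simp
  rw [hkey]
  exact div_nonneg (by linarith) (by positivity)
end

section
/- Let ε₁, ε₂ > 0 and let b, r ∈ ℝ satisfy b ≥ 0, r > 0 and D := 1 − ε₁ r − ε₂ b > 0. Let d ≥ 1 and p, q ∈ ℝᵈ, and set w = ((1 − ε₂ b)/D²)·((1 − ε₂ b)·p/r + ε₂ q). Then the exact identity r·D·w − (ε₁² r²/D)·p − (ε₁ ε₂ r²/D)·q = (1 + ε₁ r − ε₂ b)·p + ε₂ r·q holds in ℝᵈ. -/
/-!
Write `a = 1 - ε₂ b` and `s = ε₁ r`, so that `D = a - s`. Both sides are combinations of `p` and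
`q`, and the identity reduces to one scalar identity per gradient. For `∇r` the coefficient
`(a² - s²) / D` collapses to `a + s` by the difference of squares; for `∇b` the coefficient
`ε₂ r (a - s) / D` collapses to `ε₂ r`.
-/

theorem mobility_mul_entropy_grad_coeff_fst {a s r : ℝ} (hr : r ≠ 0) (hD : a - s ≠ 0) :
    r * (a - s) * (a / (a - s) ^ 2 * (a / r)) - s ^ 2 / (a - s) = a + s := by
  have hsq : a ^ 2 - s ^ 2 = (a - s) * (a + s) := by ring
  field_simp
  linear_combination hsq

theorem mobility_mul_entropy_grad_coeff_snd {a s r c : ℝ} (hD : a - s ≠ 0) :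
    r * (a - s) * (a / (a - s) ^ 2 * c) - s * c * r / (a - s) = c * r := by
  field_simp

theorem agf_decomposition_pair2_general
    (ε₁ ε₂ b r : ℝ) (hr : 0 < r)
    (hD : 0 < 1 - ε₁ * r - ε₂ * b)
    (d : ℕ) (p q : EuclideanSpace ℝ (Fin d)) :
    (r * (1 - ε₁ * r - ε₂ * b)) •
        (((1 - ε₂ * b) / (1 - ε₁ * r - ε₂ * b) ^ 2) •
          (((1 - ε₂ * b) / r) • p + ε₂ • q))
      - (ε₁ ^ 2 * r ^ 2 / (1 - ε₁ * r - ε₂ * b)) • p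
      - (ε₁ * ε₂ * r ^ 2 / (1 - ε₁ * r - ε₂ * b)) • q
    = (1 + ε₁ * r - ε₂ * b) • p + (ε₂ * r) • q := by
  have hD' : (1 - ε₂ * b) - ε₁ * r ≠ 0 := by linarith
  match_scalars
  · convert mobility_mul_entropy_grad_coeff_fst hr.ne' hD' using 1 <;> ring
  · convert mobility_mul_entropy_grad_coeff_snd (r := r) (c := ε₂) hD' using 1 <;> ring

/-- Exact asymptotic-gradient-flow decomposition (5.1) of the paper: with D = 1-ε₁r-ε₂b
and w the gradient of the entropy variable u₂ of the second pair, the exact flux of the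
Fokker–Planck equation equals m₂(r)w minus explicit second-order remainder terms. -/
theorem agf_decomposition_pair2
    (ε₁ ε₂ b r : ℝ) (hε₁ : 0 < ε₁) (hε₂ : 0 < ε₂) (hb : 0 ≤ b) (hr : 0 < r)
    (hD : 0 < 1 - ε₁ * r - ε₂ * b)
    (d : ℕ) (hd : 1 ≤ d) (p q : EuclideanSpace ℝ (Fin d)) :
    (r * (1 - ε₁ * r - ε₂ * b)) •
        (((1 - ε₂ * b) / (1 - ε₁ * r - ε₂ * b) ^ 2) •
          (((1 - ε₂ * b) / r) • p + ε₂ • q))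
      - (ε₁ ^ 2 * r ^ 2 / (1 - ε₁ * r - ε₂ * b)) • p
      - (ε₁ * ε₂ * r ^ 2 / (1 - ε₁ * r - ε₂ * b)) • q
    = (1 + ε₁ * r - ε₂ * b) • p + (ε₂ * r) • q :=
  agf_decomposition_pair2_general ε₁ ε₂ b r hr hD d p q
end

section
/- Fix reals ē₁, ē₂, ē₃ > 0, α ≥ 0, β ≥ 0 with 2α − β = 1, and bounds R, B, M > 0. Then there exist ε₀ > 0 and C > 0 such that for every ε ∈ (0, ε₀], every r ∈ (0, R], every b ∈ [0, B], and all p, q ∈ ℝᵈ with ‖p‖ ≤ M and ‖q‖ ≤ M the following holds: writing ε₁ = ε·ē₁, ε₂ = ε·ē₂, ε₃ = ε·ē₃, D_α = 1 − α ε₁ r − ε₃ b, m₃(r) = r(1 − β ε₁ r − ε₂ b), and w₃ = ((1 − ε₃ b)/D_α²)·((1 − ε₃ b)·p/r + ε₃·q), one has ‖m₃(r)·w₃ − [(1 + ε₁ r − ε₂ b)·p + ε₃ r·q]‖ ≤ C·ε². -/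
set_option maxHeartbeats 1000000


/-- The family of entropy–mobility pairs (E₃, m₃) with 2α - β = 1 is an asymptotic
gradient flow at order ε for the Fokker–Planck equation: the flux discrepancy
between m₃(r)∇u₃ and the exact flux is O(ε²), uniformly on bounded sets (Section 2.1,
(2.6) of the paper). -/
theorem agf_family_order_eps_squared
    (ebar₁ ebar₂ ebar₃ α β R B M : ℝ)
    (h₁ : 0 < ebar₁) (h₂ : 0 < ebar₂) (h₃ : 0 < ebar₃)
    (hα : 0 ≤ α) (hβ : 0 ≤ β) (hαβ : 2 * α - β = 1)
    (hR : 0 < R) (hB : 0 < B) (hM : 0 < M)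
    (d : ℕ) (hd : 1 ≤ d) :
    ∃ ε₀ > (0 : ℝ), ∃ C > (0 : ℝ),
      ∀ ε : ℝ, 0 < ε → ε ≤ ε₀ →
      ∀ r : ℝ, 0 < r → r ≤ R →
      ∀ b : ℝ, 0 ≤ b → b ≤ B →
      ∀ p q : EuclideanSpace ℝ (Fin d), ‖p‖ ≤ M → ‖q‖ ≤ M →
        ‖(r * (1 - β * (ε * ebar₁) * r - (ε * ebar₂) * b)) •
            (((1 - (ε * ebar₃) * b) / (1 - α * (ε * ebar₁) * r - (ε * ebar₃) * b) ^ 2) •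
              (((1 - (ε * ebar₃) * b) / r) • p + (ε * ebar₃) • q))
          - ((1 + (ε * ebar₁) * r - (ε * ebar₂) * b) • p + ((ε * ebar₃) * r) • q)‖
        ≤ C * ε ^ 2 := by
  have hβ' : β = 2 * α - 1 := by linarith
  subst hβ'
  set X : ℝ := ebar₁ * R with hX
  set Y : ℝ := ebar₂ * B with hY
  set Z : ℝ := ebar₃ * B with hZ
  have hX0 : 0 < X := mul_pos h₁ hR
  have hY0 : 0 < Y := mul_pos h₂ hB
  have hZ0 : 0 < Z := mul_pos h₃ hB
  have hT0 : 0 < α * X + Z := by positivity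
  refine ⟨min 1 (1 / (2 * (α * X + Z))), lt_min one_pos (by positivity), ?_⟩
  set KA : ℝ := 2*α*X*Z + α*(2+α)*X^2 + 2*α*X*Y +
      (2*α*X*Z^2 + α^2*X^3 + 2*α*X^2*Z + α^2*X^2*Y + 2*α*X*Y*Z) with hKA
  set KB : ℝ := ebar₃*R*(X + Z + Y + (X*Z + Y*Z + α^2*X^2 + Z^2)) with hKB
  have hKA0 : 0 ≤ KA := by positivity
  have hKB0 : 0 ≤ KB := by positivity
  refine ⟨4*(KA + KB)*M + 1, by positivity, ?_⟩
  intro ε hε hε₀ r hr hrR b hb hbB p q hp hq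
  have hε1 : ε ≤ 1 := le_trans hε₀ (min_le_left _ _)
  have hεT : ε * (α * X + Z) ≤ 1 / 2 := by
    have h2 : ε ≤ 1 / (2 * (α * X + Z)) := le_trans hε₀ (min_le_right _ _)
    rw [le_div_iff₀ (by positivity)] at h2
    linarith
  set u : ℝ := ebar₁ * r with hu
  set v : ℝ := ebar₂ * b with hv
  set w : ℝ := ebar₃ * b with hw
  have hu0 : 0 ≤ u := by positivity
  have hv0 : 0 ≤ v := by positivity
  have hw0 : 0 ≤ w := by positivity
  have huX : u ≤ X := mul_le_mul_of_nonneg_left hrR h₁.le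
  have hvY : v ≤ Y := mul_le_mul_of_nonneg_left hbB h₂.le
  have hwZ : w ≤ Z := mul_le_mul_of_nonneg_left hbB h₃.le
  set D : ℝ := 1 - α * (ε * ebar₁) * r - (ε * ebar₃) * b with hD
  have hDhalf : 1/2 ≤ D := by
    have h1 : α * (ε * ebar₁) * r ≤ ε * (α * X) := by
      have h : α * u ≤ α * X := mul_le_mul_of_nonneg_left huX hα
      calc α * (ε * ebar₁) * r = ε * (α * u) := by rw [hu]; ring
        _ ≤ ε * (α * X) := mul_le_mul_of_nonneg_left h hε.le
    have h2 : (ε * ebar₃) * b ≤ ε * Z := by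
      calc (ε * ebar₃) * b = ε * w := by rw [hw]; ring
        _ ≤ ε * Z := mul_le_mul_of_nonneg_left hwZ hε.le
    have h3 : ε * (α * X) + ε * Z ≤ 1/2 := by
      have h4 : ε * (α * X) + ε * Z = ε * (α * X + Z) := by ring
      linarith
    simp only [hD]; linarith
  have hD0 : 0 < D := lt_of_lt_of_le (by norm_num) hDhalf
  have hD2 : (1:ℝ)/4 ≤ D^2 := by
    have h := mul_le_mul hDhalf hDhalf (by norm_num) hD0.le
    calc (1:ℝ)/4 = (1/2)*(1/2) := by norm_num
      _ ≤ D*D := h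
      _ = D^2 := (sq D).symm
  -- basic monomial bounds
  have hu2 : u^2 ≤ X^2 := pow_le_pow_left₀ hu0 huX 2
  have hu3 : u^3 ≤ X^3 := pow_le_pow_left₀ hu0 huX 3
  have hw2 : w^2 ≤ Z^2 := pow_le_pow_left₀ hw0 hwZ 2
  have huw : u*w ≤ X*Z := mul_le_mul huX hwZ hw0 hX0.le
  have huv : u*v ≤ X*Y := mul_le_mul huX hvY hv0 hX0.le
  have hvw : v*w ≤ Y*Z := mul_le_mul hvY hwZ hw0 hY0.le
  have huw2 : u*w^2 ≤ X*Z^2 := mul_le_mul huX hw2 (sq_nonneg w) hX0.le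
  have hu2w : u^2*w ≤ X^2*Z := mul_le_mul hu2 hwZ hw0 (sq_nonneg X)
  have hu2v : u^2*v ≤ X^2*Y := mul_le_mul hu2 hvY hv0 (sq_nonneg X)
  have huvw : u*(v*w) ≤ X*(Y*Z) := mul_le_mul huX hvw (mul_nonneg hv0 hw0) hX0.le
  -- ε-scaled monomial bounds (using ε ≤ 1)
  have εuw2 : ε*(u*w^2) ≤ X*Z^2 :=
    le_trans (mul_le_of_le_one_left (mul_nonneg hu0 (sq_nonneg w)) hε1) huw2
  have εu3 : ε*u^3 ≤ X^3 :=
    le_trans (mul_le_of_le_one_left (pow_nonneg hu0 3) hε1) hu3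
  have εu2w : ε*(u^2*w) ≤ X^2*Z :=
    le_trans (mul_le_of_le_one_left (mul_nonneg (sq_nonneg u) hw0) hε1) hu2w
  have εu2v : ε*(u^2*v) ≤ X^2*Y :=
    le_trans (mul_le_of_le_one_left (mul_nonneg (sq_nonneg u) hv0) hε1) hu2v
  have εuvw : ε*(u*(v*w)) ≤ X*(Y*Z) :=
    le_trans (mul_le_of_le_one_left (mul_nonneg hu0 (mul_nonneg hv0 hw0)) hε1) huvw
  have εuw : ε*(u*w) ≤ X*Z :=
    le_trans (mul_le_of_le_one_left (mul_nonneg hu0 hw0) hε1) huw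
  have εvw : ε*(v*w) ≤ Y*Z :=
    le_trans (mul_le_of_le_one_left (mul_nonneg hv0 hw0) hε1) hvw
  have εu2 : ε*u^2 ≤ X^2 :=
    le_trans (mul_le_of_le_one_left (sq_nonneg u) hε1) hu2
  have εw2 : ε*w^2 ≤ Z^2 :=
    le_trans (mul_le_of_le_one_left (sq_nonneg w) hε1) hw2
  -- α-weighted versions
  have hα2 : (0:ℝ) ≤ α^2 := sq_nonneg α
  have A1 : α*(u*w) ≤ α*(X*Z) := mul_le_mul_of_nonneg_left huw hα
  have A2 : α*(u*v) ≤ α*(X*Y) := mul_le_mul_of_nonneg_left huv hα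
  have A3 : α*u^2 ≤ α*X^2 := mul_le_mul_of_nonneg_left hu2 hα
  have A4 : α^2*u^2 ≤ α^2*X^2 := mul_le_mul_of_nonneg_left hu2 hα2
  have A5 : α*(ε*(u*w^2)) ≤ α*(X*Z^2) := mul_le_mul_of_nonneg_left εuw2 hα
  have A6 : α^2*(ε*u^3) ≤ α^2*X^3 := mul_le_mul_of_nonneg_left εu3 hα2
  have A7 : α*(ε*(u^2*w)) ≤ α*(X^2*Z) := mul_le_mul_of_nonneg_left εu2w hα
  have A8 : α^2*(ε*(u^2*v)) ≤ α^2*(X^2*Y) := mul_le_mul_of_nonneg_left εu2v hα2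
  have A9 : α*(ε*(u*(v*w))) ≤ α*(X*(Y*Z)) := mul_le_mul_of_nonneg_left εuvw hα
  have A10 : α^2*(ε*u^2) ≤ α^2*X^2 := mul_le_mul_of_nonneg_left εu2 hα2
  -- nonnegativity facts
  have N1 : (0:ℝ) ≤ α*(u*w) := mul_nonneg hα (mul_nonneg hu0 hw0)
  have N2 : (0:ℝ) ≤ α*(u*v) := mul_nonneg hα (mul_nonneg hu0 hv0)
  have N3 : (0:ℝ) ≤ α*u^2 := mul_nonneg hα (sq_nonneg u)
  have N4 : (0:ℝ) ≤ α^2*u^2 := mul_nonneg hα2 (sq_nonneg u)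
  have N5 : (0:ℝ) ≤ α*(ε*(u*w^2)) :=
    mul_nonneg hα (mul_nonneg hε.le (mul_nonneg hu0 (sq_nonneg w)))
  have N6 : (0:ℝ) ≤ α^2*(ε*u^3) :=
    mul_nonneg hα2 (mul_nonneg hε.le (pow_nonneg hu0 3))
  have N7 : (0:ℝ) ≤ α*(ε*(u^2*w)) :=
    mul_nonneg hα (mul_nonneg hε.le (mul_nonneg (sq_nonneg u) hw0))
  have N8 : (0:ℝ) ≤ α^2*(ε*(u^2*v)) :=
    mul_nonneg hα2 (mul_nonneg hε.le (mul_nonneg (sq_nonneg u) hv0))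
  have N9 : (0:ℝ) ≤ α*(ε*(u*(v*w))) :=
    mul_nonneg hα (mul_nonneg hε.le (mul_nonneg hu0 (mul_nonneg hv0 hw0)))
  have N10 : (0:ℝ) ≤ α^2*(ε*u^2) := mul_nonneg hα2 (mul_nonneg hε.le (sq_nonneg u))
  have P1 : (0:ℝ) ≤ α*(X*Z) := mul_nonneg hα (mul_nonneg hX0.le hZ0.le)
  have P2 : (0:ℝ) ≤ α*(X*Y) := mul_nonneg hα (mul_nonneg hX0.le hY0.le)
  have P3 : (0:ℝ) ≤ α*X^2 := mul_nonneg hα (sq_nonneg X)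
  have P4 : (0:ℝ) ≤ α^2*X^2 := mul_nonneg hα2 (sq_nonneg X)
  have P5 : (0:ℝ) ≤ α*(X*Z^2) := mul_nonneg hα (mul_nonneg hX0.le (sq_nonneg Z))
  have P6 : (0:ℝ) ≤ α^2*X^3 := mul_nonneg hα2 (pow_nonneg hX0.le 3)
  have P7 : (0:ℝ) ≤ α*(X^2*Z) := mul_nonneg hα (mul_nonneg (sq_nonneg X) hZ0.le)
  have P8 : (0:ℝ) ≤ α^2*(X^2*Y) := mul_nonneg hα2 (mul_nonneg (sq_nonneg X) hY0.le)
  have P9 : (0:ℝ) ≤ α*(X*(Y*Z)) :=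
    mul_nonneg hα (mul_nonneg hX0.le (mul_nonneg hY0.le hZ0.le))
  have Eε1 : (0:ℝ) ≤ ε*(u*w) := mul_nonneg hε.le (mul_nonneg hu0 hw0)
  have Eε2 : (0:ℝ) ≤ ε*(v*w) := mul_nonneg hε.le (mul_nonneg hv0 hw0)
  have Eε3 : (0:ℝ) ≤ ε*w^2 := mul_nonneg hε.le (sq_nonneg w)
  -- numerators
  set NA : ℝ := (1 - (2*α-1) * (ε * ebar₁) * r - (ε * ebar₂) * b) * (1 - (ε * ebar₃) * b)^2
      - (1 + (ε * ebar₁) * r - (ε * ebar₂) * b) * D^2 with hNA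
  set NB : ℝ := (ε * ebar₃) * r *
      ((1 - (2*α-1) * (ε * ebar₁) * r - (ε * ebar₂) * b) * (1 - (ε * ebar₃) * b) - D^2)
      with hNB
  set QA : ℝ := 2*α*u*w + α*(2-α)*u^2 - 2*α*u*v +
      ε*(-(2*α*u*w^2) - α^2*u^3 - 2*α*u^2*w + α^2*u^2*v + 2*α*u*v*w) with hQA'
  set QB : ℝ := ebar₃*r*(u + w - v + ε*(-(u*w) + v*w - α^2*u^2 - w^2)) with hQB'
  have keyA : NA = ε^2 * QA := by
    simp only [hNA, hQA', hD, hu, hv, hw]; ring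
  have keyB : NB = ε^2 * QB := by
    simp only [hNB, hQB', hD, hu, hv, hw]; ring
  have hQA : |QA| ≤ KA := by
    rw [abs_le, hQA', hKA]
    constructor <;> linarith
  have hQB : |QB| ≤ KB := by
    have c0 : (0:ℝ) ≤ ebar₃*r := by positivity
    have c0' : ebar₃*r ≤ ebar₃*R := mul_le_mul_of_nonneg_left hrR h₃.le
    have hinner : |u + w - v + ε*(-(u*w) + v*w - α^2*u^2 - w^2)| ≤
        X + Z + Y + (X*Z + Y*Z + α^2*X^2 + Z^2) := by
      rw [abs_le]
      constructor <;> linarith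
    calc |QB| = (ebar₃*r) * |u + w - v + ε*(-(u*w) + v*w - α^2*u^2 - w^2)| := by
          rw [hQB', abs_mul, abs_of_nonneg c0]
      _ ≤ (ebar₃*R) * (X + Z + Y + (X*Z + Y*Z + α^2*X^2 + Z^2)) :=
          mul_le_mul c0' hinner (abs_nonneg _) (by positivity)
      _ = KB := by rw [hKB]
  have hNAb : |NA| ≤ KA * ε^2 := by
    rw [keyA, abs_mul, abs_of_nonneg (sq_nonneg ε)]
    have := mul_le_mul_of_nonneg_left hQA (sq_nonneg ε)
    linarith
  have hNBb : |NB| ≤ KB * ε^2 := by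
    rw [keyB, abs_mul, abs_of_nonneg (sq_nonneg ε)]
    have := mul_le_mul_of_nonneg_left hQB (sq_nonneg ε)
    linarith
  -- rewrite the vector expression
  have hrne : r ≠ 0 := ne_of_gt hr
  have hDne : D ≠ 0 := ne_of_gt hD0
  have hvec : (r * (1 - (2*α-1) * (ε * ebar₁) * r - (ε * ebar₂) * b)) •
            (((1 - (ε * ebar₃) * b) / (1 - α * (ε * ebar₁) * r - (ε * ebar₃) * b) ^ 2) •
              (((1 - (ε * ebar₃) * b) / r) • p + (ε * ebar₃) • q))
          - ((1 + (ε * ebar₁) * r - (ε * ebar₂) * b) • p + ((ε * ebar₃) * r) • q)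
        = (NA / D^2) • p + (NB / D^2) • q := by
    have hDeq : (1 - α * (ε * ebar₁) * r - (ε * ebar₃) * b) = D := rfl
    rw [hDeq]
    match_scalars
    · field_simp
      simp only [hNA]; ring
    · field_simp
      simp only [hNB]; ring
  rw [hvec]
  have habsA : |NA / D^2| ≤ 4 * (KA * ε^2) := by
    rw [abs_div, abs_of_pos (by positivity : (0:ℝ) < D^2), div_le_iff₀ (by positivity)]
    calc |NA| ≤ KA * ε^2 := hNAb
      _ = 4*(KA*ε^2)*(1/4) := by ring
      _ ≤ 4*(KA*ε^2)*D^2 := mul_le_mul_of_nonneg_left hD2 (by positivity)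
  have habsB : |NB / D^2| ≤ 4 * (KB * ε^2) := by
    rw [abs_div, abs_of_pos (by positivity : (0:ℝ) < D^2), div_le_iff₀ (by positivity)]
    calc |NB| ≤ KB * ε^2 := hNBb
      _ = 4*(KB*ε^2)*(1/4) := by ring
      _ ≤ 4*(KB*ε^2)*D^2 := mul_le_mul_of_nonneg_left hD2 (by positivity)
  have hnp : ‖(NA / D^2) • p‖ ≤ 4 * (KA * ε^2) * M := by
    rw [norm_smul, Real.norm_eq_abs]
    exact mul_le_mul habsA hp (norm_nonneg _) (by positivity)
  have hnq : ‖(NB / D^2) • q‖ ≤ 4 * (KB * ε^2) * M := by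
    rw [norm_smul, Real.norm_eq_abs]
    exact mul_le_mul habsB hq (norm_nonneg _) (by positivity)
  calc ‖(NA / D^2) • p + (NB / D^2) • q‖
      ≤ ‖(NA / D^2) • p‖ + ‖(NB / D^2) • q‖ := norm_add_le _ _
    _ ≤ 4 * (KA * ε^2) * M + 4 * (KB * ε^2) * M := add_le_add hnp hnq
    _ ≤ (4*(KA + KB)*M + 1) * ε^2 := by
        have : (0:ℝ) ≤ ε^2 := sq_nonneg ε
        linarith
end

section
/- Let ε₁ > 0, ε₂ > 0, τ > 0 and let b ∈ ℝ satisfy 0 ≤ b and ε₂·b < 1. Then the regularized entropy variable ũ(r) = log r + ε₁ r + ε₂ b − τ ε₁ log(1 − ε₁ r − ε₂ b) is strictly increasing on I = (0, (1 − ε₂ b)/ε₁) and maps I bijectively onto ℝ; in particular ũ has a strictly increasing inverse defined on all of ℝ with values in I. -/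
open Set Filter Real Topology


/-- The regularized entropy variable ũ(r) = log r + ε₁r + ε₂b - τε₁ log(1-ε₁r-ε₂b) is
strictly increasing on I = (0, (1-ε₂b)/ε₁) and maps I bijectively onto ℝ; in particular
it has a strictly increasing inverse defined on all of ℝ with values in I
(Lemma 5.2 of the paper). -/
theorem regularized_entropy_variable_bijective
    (ε₁ ε₂ τ b : ℝ) (hε₁ : 0 < ε₁) (hε₂ : 0 < ε₂) (hτ : 0 < τ)
    (hb : 0 ≤ b) (hbb : ε₂ * b < 1) :
    StrictMonoOn
      (fun r : ℝ =>
        Real.log r + ε₁ * r + ε₂ * b - τ * ε₁ * Real.log (1 - ε₁ * r - ε₂ * b))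
      (Set.Ioo (0 : ℝ) ((1 - ε₂ * b) / ε₁)) ∧
    Set.BijOn
      (fun r : ℝ =>
        Real.log r + ε₁ * r + ε₂ * b - τ * ε₁ * Real.log (1 - ε₁ * r - ε₂ * b))
      (Set.Ioo (0 : ℝ) ((1 - ε₂ * b) / ε₁)) Set.univ ∧
    ∃ v : ℝ → ℝ, StrictMono v ∧
      (∀ y : ℝ, v y ∈ Set.Ioo (0 : ℝ) ((1 - ε₂ * b) / ε₁)) ∧
      (∀ r ∈ Set.Ioo (0 : ℝ) ((1 - ε₂ * b) / ε₁),
        v (Real.log r + ε₁ * r + ε₂ * b - τ * ε₁ * Real.log (1 - ε₁ * r - ε₂ * b)) = r) ∧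
      (∀ y : ℝ,
        Real.log (v y) + ε₁ * v y + ε₂ * b
          - τ * ε₁ * Real.log (1 - ε₁ * v y - ε₂ * b) = y) := by
  set c : ℝ := (1 - ε₂ * b) / ε₁ with hc
  set f : ℝ → ℝ := fun r =>
    Real.log r + ε₁ * r + ε₂ * b - τ * ε₁ * Real.log (1 - ε₁ * r - ε₂ * b) with hf
  have hc0 : 0 < c := div_pos (by linarith) hε₁
  have hεc : ε₁ * c = 1 - ε₂ * b := by rw [hc]; field_simp
  have hpos : ∀ r ∈ Ioo (0:ℝ) c, 0 < 1 - ε₁ * r - ε₂ * b := by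
    intro r hr
    have := mul_lt_mul_of_pos_left hr.2 hε₁
    nlinarith
  -- strict monotonicity
  have hmono : StrictMonoOn f (Ioo (0:ℝ) c) := by
    intro x hx y hy hxy
    have h1 : Real.log x < Real.log y := Real.log_lt_log hx.1 hxy
    have h2 : Real.log (1 - ε₁ * y - ε₂ * b) < Real.log (1 - ε₁ * x - ε₂ * b) := by
      apply Real.log_lt_log (hpos y hy)
      nlinarith
    have hτε : 0 < τ * ε₁ := mul_pos hτ hε₁
    simp only [hf]
    nlinarith [mul_lt_mul_of_pos_left h2 hτε]
  -- continuity on I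
  have hcont : ContinuousOn f (Ioo (0:ℝ) c) := by
    intro r hr
    apply ContinuousAt.continuousWithinAt
    have h1 : ContinuousAt Real.log r := Real.continuousAt_log (ne_of_gt hr.1)
    have h3 : ContinuousAt (fun r : ℝ => Real.log (1 - ε₁ * r - ε₂ * b)) r := by
      show ContinuousAt (Real.log ∘ (fun r : ℝ => 1 - ε₁ * r - ε₂ * b)) r
      exact ContinuousAt.comp (Real.continuousAt_log (ne_of_gt (hpos r hr))) (by fun_prop)
    fun_prop
  -- tends to -∞ at 0⁺
  have hbot : Tendsto f (𝓝[>] (0:ℝ)) atBot := by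
    have h1 : Tendsto Real.log (𝓝[>] (0:ℝ)) atBot :=
      Real.tendsto_log_nhdsGT_zero
    have hg : ContinuousAt (fun r : ℝ => ε₁ * r + ε₂ * b
        - τ * ε₁ * Real.log (1 - ε₁ * r - ε₂ * b)) 0 := by
      have h3 : ContinuousAt (fun r : ℝ => Real.log (1 - ε₁ * r - ε₂ * b)) 0 := by
        show ContinuousAt (Real.log ∘ (fun r : ℝ => 1 - ε₁ * r - ε₂ * b)) 0
        apply ContinuousAt.comp (Real.continuousAt_log ?_) (by fun_prop)
        simp only [mul_zero, sub_zero]; nlinarith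
      fun_prop
    have h2 : Tendsto (fun r : ℝ => ε₁ * r + ε₂ * b
        - τ * ε₁ * Real.log (1 - ε₁ * r - ε₂ * b)) (𝓝[>] (0:ℝ)) (𝓝 _) :=
      hg.tendsto.mono_left nhdsWithin_le_nhds
    have h4 := tendsto_atBot_add_right_of_ge' _ _ h1
      (h2.eventually (eventually_le_nhds (lt_add_one _)))
    apply h4.congr
    intro r; simp only [hf]; ring
  -- tends to +∞ at c⁻
  have htop : Tendsto f (𝓝[<] c) atTop := by
    have hgc : Tendsto (fun r : ℝ => 1 - ε₁ * r - ε₂ * b) (𝓝[<] c) (𝓝[>] (0:ℝ)) := by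
      apply tendsto_nhdsWithin_of_tendsto_nhds_of_eventually_within
      · have hk : Continuous (fun r : ℝ => 1 - ε₁ * r - ε₂ * b) := by fun_prop
        have h0 := hk.tendsto c
        have : (1 : ℝ) - ε₁ * c - ε₂ * b = 0 := by rw [hεc]; ring
        rw [this] at h0
        exact h0.mono_left nhdsWithin_le_nhds
      · filter_upwards [self_mem_nhdsWithin] with r hr
        have := mul_lt_mul_of_pos_left (show r < c from hr) hε₁
        simp only [Set.mem_Ioi]; nlinarith
    have h1 : Tendsto (fun r : ℝ => Real.log (1 - ε₁ * r - ε₂ * b)) (𝓝[<] c) atBot :=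
      Real.tendsto_log_nhdsGT_zero.comp hgc
    have h2 : Tendsto (fun r : ℝ => τ * ε₁ * (-Real.log (1 - ε₁ * r - ε₂ * b)))
        (𝓝[<] c) atTop :=
      (tendsto_neg_atBot_atTop.comp h1).const_mul_atTop (mul_pos hτ hε₁)
    have hgc2 : ContinuousAt (fun r : ℝ => Real.log r + ε₁ * r + ε₂ * b) c := by
      have := Real.continuousAt_log (ne_of_gt hc0)
      fun_prop
    have h3 : Tendsto (fun r : ℝ => Real.log r + ε₁ * r + ε₂ * b) (𝓝[<] c) (𝓝 _) :=
      hgc2.tendsto.mono_left nhdsWithin_le_nhds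
    have h4 := tendsto_atTop_add_left_of_le' (𝓝[<] c) _
      (h3.eventually (eventually_ge_nhds (sub_one_lt _))) h2
    apply h4.congr
    intro r; simp only [hf]; ring
  -- surjectivity
  have hsurj : ∀ y : ℝ, ∃ r ∈ Ioo (0:ℝ) c, f r = y := by
    intro y
    have hne1 : (𝓝[>] (0:ℝ)).NeBot := nhdsGT_neBot 0
    have hne2 : (𝓝[<] c).NeBot := nhdsLT_neBot c
    obtain ⟨a, ha, hfa⟩ : ∃ a, a ∈ Ioo (0:ℝ) c ∧ f a < y := by
      have hev : ∀ᶠ r in 𝓝[>] (0:ℝ), f r < y := hbot.eventually (eventually_lt_atBot y)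
      have hmem : ∀ᶠ r in 𝓝[>] (0:ℝ), r ∈ Ioo (0:ℝ) c := by
        rw [eventually_iff, ← Ioi_inter_Iio]
        exact Filter.inter_mem self_mem_nhdsWithin (nhdsWithin_le_nhds (Iio_mem_nhds hc0))
      obtain ⟨a, ha1, ha2⟩ := (hev.and hmem).exists
      exact ⟨a, ha2, ha1⟩
    obtain ⟨d, hd, hfd⟩ : ∃ d, d ∈ Ioo (0:ℝ) c ∧ y < f d := by
      have hev : ∀ᶠ r in 𝓝[<] c, y < f r := htop.eventually (eventually_gt_atTop y)
      have hmem : ∀ᶠ r in 𝓝[<] c, r ∈ Ioo (0:ℝ) c := by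
        rw [eventually_iff, ← Ioi_inter_Iio]
        exact Filter.inter_mem (nhdsWithin_le_nhds (Ioi_mem_nhds hc0)) self_mem_nhdsWithin
      obtain ⟨d, hd1, hd2⟩ := (hev.and hmem).exists
      exact ⟨d, hd2, hd1⟩
    have had : a < d := by
      by_contra h
      push_neg at h
      have := hmono.monotoneOn hd ha h
      linarith
    have hsub : Icc a d ⊆ Ioo (0:ℝ) c := fun x hx =>
      ⟨lt_of_lt_of_le ha.1 hx.1, lt_of_le_of_lt hx.2 hd.2⟩
    have := intermediate_value_Icc had.le (hcont.mono hsub)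
    obtain ⟨r, hr, hfr⟩ := this ⟨hfa.le, hfd.le⟩
    exact ⟨r, hsub hr, hfr⟩
  have hbij : Set.BijOn f (Ioo (0:ℝ) c) Set.univ := by
    refine ⟨fun r _ => trivial, hmono.injOn, fun y _ => ?_⟩
    obtain ⟨r, hr, hfr⟩ := hsurj y
    exact ⟨r, hr, hfr⟩
  refine ⟨hmono, hbij, ?_⟩
  choose v hv hfv using hsurj
  refine ⟨v, ?_, hv, ?_, hfv⟩
  · intro y₁ y₂ hy
    rw [← hfv y₁, ← hfv y₂] at hy
    exact (hmono.lt_iff_lt (hv y₁) (hv y₂)).mp hy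
  · intro r hr
    exact hmono.injOn (hv _) hr (hfv _)
end

section
/- Let ε₁, ε₂ > 0 and τ > 0, and let b, r ∈ ℝ satisfy b ≥ 0, ε₂ b < 1, r > 0 and ε₁ r + ε₂ b < 1. Let d ≥ 1 and p, q ∈ ℝᵈ. Set D = 1 − ε₁ r − ε₂ b, n(r) = r(1 − ε₂ b) + ε₁ ε₂ r² b/(1 + ε₁ r), w = (1/r + ε₁ + τ ε₁²/D)·p + (ε₂ + τ ε₁ ε₂/D)·q, and g = (ε₂² r b/(1 + ε₁ r))·q. Then n(r)·‖w‖² + ⟨g, w⟩ ≥ (ε₁/4)·‖p‖² + (τ²/2)·(ε₁³ r²/D²)·‖ε₁ p + ε₂ q‖² − (7 ε₂²/(4 ε₁))·‖q‖². -/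
open scoped RealInnerProductSpace

private lemma combo_aux (α γ c P S J : ℝ) (hP : 0 ≤ P) (hS : 0 ≤ S) (hJ : J ^ 2 ≤ P * S)
    (hα : 0 ≤ α) (hγ : 0 ≤ γ) (hc : c ^ 2 ≤ 4 * (α * γ)) : 0 ≤ α * P + γ * S + c * J := by
  have h4 : (0:ℝ) ≤ 4 * (α * γ) := by nlinarith [mul_nonneg hα hγ]
  have hkey : c ^ 2 * J ^ 2 ≤ 4 * (α * γ) * (P * S) :=
    mul_le_mul hc hJ (sq_nonneg J) h4
  nlinarith [hkey, sq_nonneg (α * P - γ * S), mul_nonneg hα hP, mul_nonneg hγ hS,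
    sq_nonneg (α * P + γ * S + c * J)]

private lemma coeff0_aux (u v : ℝ) (hu0 : 0 < u) (hu1 : u < 1) (hv0 : 0 ≤ v)
    (huv : u + v < 1) :
    u * (7 + 7 * u - 2 * v) ^ 2 ≤ 2 * (1 + u) ^ 2 * ((2 + 3 * u - 2 * v) * (7 - 2 * u ^ 2)) := by
  have h1 : (7 + 7 * u - 2 * v) ^ 2 ≤ 49 * (1 + u) ^ 2 := by nlinarith
  have h2 : 25 * u ≤ (2 + 3 * u - 2 * v) * (7 - 2 * u ^ 2) := by nlinarith
  nlinarith [sq_nonneg (1 + u), mul_le_mul_of_nonneg_left h1 hu0.le,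
    mul_le_mul_of_nonneg_left h2 (sq_nonneg (1 + u))]

private lemma coeff2_aux (u v : ℝ) (hu0 : 0 < u) (hu1 : u < 1) (hv0 : 0 ≤ v)
    (huv : u + v < 1) :
    (2 + 2 * u - 2 * v - u * v) ^ 2 ≤ (2 + 3 * u - 2 * v) * (2 + u - 2 * v - u ^ 2) * (1 + u) := by
  nlinarith [mul_nonneg (mul_nonneg hu0.le (by linarith : (0:ℝ) ≤ 1 - v))
      (by nlinarith : (0:ℝ) ≤ 2 - u ^ 2),
    mul_nonneg (sq_nonneg u) (by nlinarith : (0:ℝ) ≤ 2 + 4 * v - 4 * v ^ 2),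
    mul_nonneg (sq_nonneg u)
      (by nlinarith : (0:ℝ) ≤ (1 - v) ^ 2 - u ^ 2)]

set_option maxHeartbeats 2000000 in
private lemma scalar_master (ε₁ ε₂ τ b r P Q I : ℝ) (hε₁ : 0 < ε₁) (hε₂ : 0 < ε₂) (hτ : 0 < τ)
    (hb : 0 ≤ b) (hbb : ε₂ * b < 1) (hr : 0 < r) (hS : ε₁ * r + ε₂ * b < 1)
    (hP : 0 ≤ P) (hQ : 0 ≤ Q) (hCS : I ^ 2 ≤ P * Q)
    (hSnn : 0 ≤ ε₁ ^ 2 * P + 2 * (ε₁ * ε₂) * I + ε₂ ^ 2 * Q) :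
    (r * (1 - ε₂ * b) + ε₁ * ε₂ * r ^ 2 * b / (1 + ε₁ * r)) *
        ((1 / r + ε₁ + τ * ε₁ ^ 2 / (1 - ε₁ * r - ε₂ * b)) ^ 2 * P
          + 2 * ((1 / r + ε₁ + τ * ε₁ ^ 2 / (1 - ε₁ * r - ε₂ * b))
              * (ε₂ + τ * ε₁ * ε₂ / (1 - ε₁ * r - ε₂ * b))) * I
          + (ε₂ + τ * ε₁ * ε₂ / (1 - ε₁ * r - ε₂ * b)) ^ 2 * Q)
      + (ε₂ ^ 2 * r * b / (1 + ε₁ * r) * (1 / r + ε₁ + τ * ε₁ ^ 2 / (1 - ε₁ * r - ε₂ * b)) * I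
          + ε₂ ^ 2 * r * b / (1 + ε₁ * r) * (ε₂ + τ * ε₁ * ε₂ / (1 - ε₁ * r - ε₂ * b)) * Q)
    ≥ ε₁ / 4 * P
      + τ ^ 2 / 2 * (ε₁ ^ 3 * r ^ 2 / (1 - ε₁ * r - ε₂ * b) ^ 2)
          * (ε₁ ^ 2 * P + 2 * (ε₁ * ε₂) * I + ε₂ ^ 2 * Q)
      - 7 * ε₂ ^ 2 / (4 * ε₁) * Q := by
  have hu0 : 0 < ε₁ * r := mul_pos hε₁ hr
  have hv0 : 0 ≤ ε₂ * b := mul_nonneg hε₂.le hb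
  have hu1 : ε₁ * r < 1 := by linarith
  have hD : 0 < 1 - ε₁ * r - ε₂ * b := by linarith
  have hm : 0 < 1 + ε₁ * r := by linarith
  have hrne : r ≠ 0 := ne_of_gt hr
  have hDne : (1 - ε₁ * r - ε₂ * b) ≠ 0 := ne_of_gt hD
  have hmne : (1 + ε₁ * r) ≠ 0 := ne_of_gt hm
  have hε₁ne : ε₁ ≠ 0 := ne_of_gt hε₁
  set t : ℝ := τ * ε₁ / (1 - ε₁ * r - ε₂ * b) with htdef
  have hrw1 : 1 / r + ε₁ + τ * ε₁ ^ 2 / (1 - ε₁ * r - ε₂ * b) = 1 / r + ε₁ + ε₁ * t := by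
    rw [htdef]; ring
  have hrw2 : ε₂ + τ * ε₁ * ε₂ / (1 - ε₁ * r - ε₂ * b) = ε₂ + ε₂ * t := by
    rw [htdef]; ring
  have hrw3 : τ ^ 2 / 2 * (ε₁ ^ 3 * r ^ 2 / (1 - ε₁ * r - ε₂ * b) ^ 2)
      = ε₁ * r ^ 2 * t ^ 2 / 2 := by
    rw [htdef]; field_simp
  rw [hrw1, hrw2, hrw3]
  have ht0 : 0 ≤ t := by rw [htdef]; positivity
  -- abbreviated quantities
  have hL0 : (0:ℝ) ≤ 1 + t := by linarith
  have hfr : 0 ≤ ε₁ * ε₂ * r ^ 2 * b / (1 + ε₁ * r) := by positivity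
  have hfr2 : 0 ≤ ε₂ * b * r / (1 + ε₁ * r) := by positivity
  have hfr3 : 0 ≤ ε₁ * ε₂ * r * b / (1 + ε₁ * r) := by positivity
  have hβ : ε₂ * b / (1 + ε₁ * r) ≤ 1 := by
    rw [div_le_one hm]; linarith
  have hβ0 : 0 ≤ ε₂ * b / (1 + ε₁ * r) := by positivity
  -- α ≥ 0
  have hα : 0 ≤ (1 - ε₁ * r - ε₂ * b) / r + 5 * ε₁ / 2 := by positivity
  -- g2 ≥ 0
  have hg2 : 0 ≤ (r * (1 - ε₂ * b) + ε₁ * ε₂ * r ^ 2 * b / (1 + ε₁ * r)) - ε₁ * r ^ 2 / 2 := by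
    nlinarith [mul_le_mul_of_nonneg_left (by linarith : ε₁ * r ≤ 1 - ε₂ * b) hr.le]
  -- g1 ≥ 0
  have hg1 : 0 ≤ ε₂ * b * r / (1 + ε₁ * r) + ε₁ * r ^ 2 := by positivity
  -- g0 ≥ 0
  have hg0 : 0 ≤ 7 / (4 * ε₁) - ε₁ * r ^ 2 / 2 := by
    rw [sub_nonneg, div_le_div_iff₀ (by norm_num) (by positivity)]
    nlinarith [sq_nonneg (ε₁ * r)]
  -- a ≥ 0, where a = 2n/r - ε₁ε₂rb/m
  have haeq : 2 * (r * (1 - ε₂ * b) + ε₁ * ε₂ * r ^ 2 * b / (1 + ε₁ * r)) / r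
      - ε₁ * ε₂ * r * b / (1 + ε₁ * r)
      = 2 * (1 - ε₂ * b) + ε₁ * ε₂ * r * b / (1 + ε₁ * r) := by
    field_simp; ring
  have ha : 0 ≤ 2 * (r * (1 - ε₂ * b) + ε₁ * ε₂ * r ^ 2 * b / (1 + ε₁ * r)) / r
      - ε₁ * ε₂ * r * b / (1 + ε₁ * r) := by
    rw [haeq]; nlinarith
  -- A₂ : a² ≤ 4 α g2
  have hA2 : (2 * (r * (1 - ε₂ * b) + ε₁ * ε₂ * r ^ 2 * b / (1 + ε₁ * r)) / r
        - ε₁ * ε₂ * r * b / (1 + ε₁ * r)) ^ 2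
      ≤ 4 * (((1 - ε₁ * r - ε₂ * b) / r + 5 * ε₁ / 2)
        * ((r * (1 - ε₂ * b) + ε₁ * ε₂ * r ^ 2 * b / (1 + ε₁ * r)) - ε₁ * r ^ 2 / 2)) := by
    have hN2 := coeff2_aux (ε₁ * r) (ε₂ * b) hu0 hu1 hv0 hS
    rw [← sub_nonneg]
    have heq : 4 * (((1 - ε₁ * r - ε₂ * b) / r + 5 * ε₁ / 2)
        * ((r * (1 - ε₂ * b) + ε₁ * ε₂ * r ^ 2 * b / (1 + ε₁ * r)) - ε₁ * r ^ 2 / 2))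
        - (2 * (r * (1 - ε₂ * b) + ε₁ * ε₂ * r ^ 2 * b / (1 + ε₁ * r)) / r
          - ε₁ * ε₂ * r * b / (1 + ε₁ * r)) ^ 2
        = ((2 + 3 * (ε₁ * r) - 2 * (ε₂ * b)) * (2 + (ε₁ * r) - 2 * (ε₂ * b) - (ε₁ * r) ^ 2)
            * (1 + ε₁ * r)
          - (2 + 2 * (ε₁ * r) - 2 * (ε₂ * b) - (ε₁ * r) * (ε₂ * b)) ^ 2)
          / (1 + ε₁ * r) ^ 2 := by
      field_simp; ring
    rw [heq]
    exact div_nonneg (by linarith) (by positivity)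
  -- A₀ : (β - 7/2)² ≤ 4 α g0
  have hA0 : (ε₂ * b / (1 + ε₁ * r) - 7 / 2) ^ 2
      ≤ 4 * (((1 - ε₁ * r - ε₂ * b) / r + 5 * ε₁ / 2) * (7 / (4 * ε₁) - ε₁ * r ^ 2 / 2)) := by
    have hN0 := coeff0_aux (ε₁ * r) (ε₂ * b) hu0 hu1 hv0 hS
    rw [← sub_nonneg]
    have heq : 4 * (((1 - ε₁ * r - ε₂ * b) / r + 5 * ε₁ / 2) * (7 / (4 * ε₁) - ε₁ * r ^ 2 / 2))
        - (ε₂ * b / (1 + ε₁ * r) - 7 / 2) ^ 2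
        = (2 * (1 + ε₁ * r) ^ 2 * ((2 + 3 * (ε₁ * r) - 2 * (ε₂ * b)) * (7 - 2 * (ε₁ * r) ^ 2))
            - (ε₁ * r) * (7 + 7 * (ε₁ * r) - 2 * (ε₂ * b)) ^ 2)
          / (4 * (ε₁ * r) * (1 + ε₁ * r) ^ 2) := by
      field_simp; ring
    rw [heq]
    exact div_nonneg (by linarith) (by positivity)
  -- now assemble γ ≥ 0 and c² ≤ 4αγ
  set L : ℝ := 1 + t with hLdef
  have hγ : 0 ≤ ((r * (1 - ε₂ * b) + ε₁ * ε₂ * r ^ 2 * b / (1 + ε₁ * r)) - ε₁ * r ^ 2 / 2) * L ^ 2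
      + (ε₂ * b * r / (1 + ε₁ * r) + ε₁ * r ^ 2) * L + (7 / (4 * ε₁) - ε₁ * r ^ 2 / 2) :=
    add_nonneg (add_nonneg (mul_nonneg hg2 (sq_nonneg L)) (mul_nonneg hg1 hL0)) hg0
  have hA1 : 2 * ((2 * (r * (1 - ε₂ * b) + ε₁ * ε₂ * r ^ 2 * b / (1 + ε₁ * r)) / r
        - ε₁ * ε₂ * r * b / (1 + ε₁ * r)) * (ε₂ * b / (1 + ε₁ * r) - 7 / 2))
      ≤ 4 * (((1 - ε₁ * r - ε₂ * b) / r + 5 * ε₁ / 2)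
        * (ε₂ * b * r / (1 + ε₁ * r) + ε₁ * r ^ 2)) := by
    have h1 : (2 * (r * (1 - ε₂ * b) + ε₁ * ε₂ * r ^ 2 * b / (1 + ε₁ * r)) / r
        - ε₁ * ε₂ * r * b / (1 + ε₁ * r)) * (ε₂ * b / (1 + ε₁ * r) - 7 / 2) ≤ 0 :=
      mul_nonpos_of_nonneg_of_nonpos ha (by linarith)
    nlinarith [mul_nonneg hα hg1]
  have hc : ((2 * (r * (1 - ε₂ * b) + ε₁ * ε₂ * r ^ 2 * b / (1 + ε₁ * r)) / r
        - ε₁ * ε₂ * r * b / (1 + ε₁ * r)) * L + (ε₂ * b / (1 + ε₁ * r) - 7 / 2)) ^ 2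
      ≤ 4 * (((1 - ε₁ * r - ε₂ * b) / r + 5 * ε₁ / 2)
        * (((r * (1 - ε₂ * b) + ε₁ * ε₂ * r ^ 2 * b / (1 + ε₁ * r)) - ε₁ * r ^ 2 / 2) * L ^ 2
          + (ε₂ * b * r / (1 + ε₁ * r) + ε₁ * r ^ 2) * L
          + (7 / (4 * ε₁) - ε₁ * r ^ 2 / 2))) := by
    nlinarith [mul_le_mul_of_nonneg_right hA2 (sq_nonneg L),
      mul_le_mul_of_nonneg_right hA1 hL0, hA0]
  have hJPS : (ε₁ * P + ε₂ * I) ^ 2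
      ≤ P * (ε₁ ^ 2 * P + 2 * (ε₁ * ε₂) * I + ε₂ ^ 2 * Q) := by
    nlinarith [mul_le_mul_of_nonneg_left hCS (sq_nonneg ε₂)]
  have hcombo := combo_aux ((1 - ε₁ * r - ε₂ * b) / r + 5 * ε₁ / 2)
    (((r * (1 - ε₂ * b) + ε₁ * ε₂ * r ^ 2 * b / (1 + ε₁ * r)) - ε₁ * r ^ 2 / 2) * L ^ 2
      + (ε₂ * b * r / (1 + ε₁ * r) + ε₁ * r ^ 2) * L + (7 / (4 * ε₁) - ε₁ * r ^ 2 / 2))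
    ((2 * (r * (1 - ε₂ * b) + ε₁ * ε₂ * r ^ 2 * b / (1 + ε₁ * r)) / r
        - ε₁ * ε₂ * r * b / (1 + ε₁ * r)) * L + (ε₂ * b / (1 + ε₁ * r) - 7 / 2))
    P (ε₁ ^ 2 * P + 2 * (ε₁ * ε₂) * I + ε₂ ^ 2 * Q) (ε₁ * P + ε₂ * I)
    hP hSnn hJPS hα hγ hc
  rw [ge_iff_le, ← sub_nonneg]
  have hfinal :
      (r * (1 - ε₂ * b) + ε₁ * ε₂ * r ^ 2 * b / (1 + ε₁ * r)) *
        ((1 / r + ε₁ + ε₁ * t) ^ 2 * P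
          + 2 * ((1 / r + ε₁ + ε₁ * t)
              * (ε₂ + ε₂ * t)) * I
          + (ε₂ + ε₂ * t) ^ 2 * Q)
      + (ε₂ ^ 2 * r * b / (1 + ε₁ * r) * (1 / r + ε₁ + ε₁ * t) * I
          + ε₂ ^ 2 * r * b / (1 + ε₁ * r) * (ε₂ + ε₂ * t) * Q)
      - (ε₁ / 4 * P
        + ε₁ * r ^ 2 * t ^ 2 / 2
            * (ε₁ ^ 2 * P + 2 * (ε₁ * ε₂) * I + ε₂ ^ 2 * Q)
        - 7 * ε₂ ^ 2 / (4 * ε₁) * Q)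
      = ((1 - ε₁ * r - ε₂ * b) / r + 5 * ε₁ / 2) * P
        + (((r * (1 - ε₂ * b) + ε₁ * ε₂ * r ^ 2 * b / (1 + ε₁ * r)) - ε₁ * r ^ 2 / 2) * L ^ 2
            + (ε₂ * b * r / (1 + ε₁ * r) + ε₁ * r ^ 2) * L + (7 / (4 * ε₁) - ε₁ * r ^ 2 / 2))
          * (ε₁ ^ 2 * P + 2 * (ε₁ * ε₂) * I + ε₂ ^ 2 * Q)
        + ((2 * (r * (1 - ε₂ * b) + ε₁ * ε₂ * r ^ 2 * b / (1 + ε₁ * r)) / r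
            - ε₁ * ε₂ * r * b / (1 + ε₁ * r)) * L + (ε₂ * b / (1 + ε₁ * r) - 7 / 2))
          * (ε₁ * P + ε₂ * I) := by
    rw [hLdef]
    field_simp
    ring
  rw [hfinal]
  exact hcombo

set_option maxHeartbeats 1000000 in
/-- Pointwise form of the entropy dissipation estimate of Lemma 5.5 of the paper:
with D = 1-ε₁r-ε₂b, n(r) = r(1-ε₂b) + ε₁ε₂r²b/(1+ε₁r), w the gradient of the
regularized entropy variable ũ and g the drift term, one has
n(r)‖w‖² + ⟨g,w⟩ ≥ (ε₁/4)‖p‖² + (τ²/2)(ε₁³r²/D²)‖ε₁p+ε₂q‖² - (7ε₂²/(4ε₁))‖q‖². -/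
theorem dissipation_estimate_regularized
    (ε₁ ε₂ τ b r : ℝ) (hε₁ : 0 < ε₁) (hε₂ : 0 < ε₂) (hτ : 0 < τ)
    (hb : 0 ≤ b) (hbb : ε₂ * b < 1) (hr : 0 < r) (hS : ε₁ * r + ε₂ * b < 1)
    (d : ℕ) (hd : 1 ≤ d) (p q : EuclideanSpace ℝ (Fin d)) :
    (r * (1 - ε₂ * b) + ε₁ * ε₂ * r ^ 2 * b / (1 + ε₁ * r)) *
        ‖(1 / r + ε₁ + τ * ε₁ ^ 2 / (1 - ε₁ * r - ε₂ * b)) • p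
          + (ε₂ + τ * ε₁ * ε₂ / (1 - ε₁ * r - ε₂ * b)) • q‖ ^ 2
      + ⟪(ε₂ ^ 2 * r * b / (1 + ε₁ * r)) • q,
          (1 / r + ε₁ + τ * ε₁ ^ 2 / (1 - ε₁ * r - ε₂ * b)) • p
            + (ε₂ + τ * ε₁ * ε₂ / (1 - ε₁ * r - ε₂ * b)) • q⟫
    ≥ ε₁ / 4 * ‖p‖ ^ 2
      + τ ^ 2 / 2 * (ε₁ ^ 3 * r ^ 2 / (1 - ε₁ * r - ε₂ * b) ^ 2) * ‖ε₁ • p + ε₂ • q‖ ^ 2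
      - 7 * ε₂ ^ 2 / (4 * ε₁) * ‖q‖ ^ 2 := by
  have e1 : ∀ a c : ℝ, ‖a • p + c • q‖ ^ 2
      = a ^ 2 * ‖p‖ ^ 2 + 2 * (a * c) * ⟪p, q⟫ + c ^ 2 * ‖q‖ ^ 2 := by
    intro a c
    rw [@norm_add_sq_real, real_inner_smul_left, real_inner_smul_right,
      norm_smul, norm_smul, mul_pow, mul_pow, Real.norm_eq_abs, Real.norm_eq_abs,
      sq_abs, sq_abs]
    ring
  have e2 : ∀ g a c : ℝ, ⟪g • q, a • p + c • q⟫
      = g * a * ⟪p, q⟫ + g * c * ‖q‖ ^ 2 := by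
    intro g a c
    rw [inner_add_right, real_inner_smul_left, real_inner_smul_left,
      real_inner_smul_right, real_inner_smul_right, real_inner_comm q p,
      real_inner_self_eq_norm_sq]
    ring
  have hCS : ⟪p, q⟫ ^ 2 ≤ ‖p‖ ^ 2 * ‖q‖ ^ 2 := by
    have h := abs_real_inner_le_norm p q
    nlinarith [abs_nonneg ⟪p, q⟫, sq_abs ⟪p, q⟫, norm_nonneg p, norm_nonneg q]
  have hSnn : 0 ≤ ε₁ ^ 2 * ‖p‖ ^ 2 + 2 * (ε₁ * ε₂) * ⟪p, q⟫ + ε₂ ^ 2 * ‖q‖ ^ 2 := by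
    rw [← e1 ε₁ ε₂]; positivity
  simp only [e1, e2]
  exact scalar_master ε₁ ε₂ τ b r (‖p‖ ^ 2) (‖q‖ ^ 2) ⟪p, q⟫ hε₁ hε₂ hτ hb hbb hr hS
    (sq_nonneg _) (sq_nonneg _) hCS hSnn
end

section
/- Let Ω ⊆ ℝᵈ be a Lebesgue-measurable set with 0 < |Ω| < ∞, let b : Ω → ℝ be a bounded measurable function with b ≥ 0 a.e., and let ε₁ > 0 and ε₃ > 0. Then there exists a unique constant χ ∈ ℝ for which there exists a measurable function r : Ω → (0, ∞) with log r(x) + ε₁ r(x) + ε₃ b(x) = χ for a.e. x ∈ Ω and ∫_Ω r(x) dx = 1; moreover this r is uniquely determined up to a.e. equality and is essentially bounded. -/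
/-!
Writing `r = eᵗ`, the pointwise equation `log r + ε₁ r = y` becomes `t + ε₁ eᵗ = y`, whose left side
is an increasing homeomorphism of `ℝ`. So the equation has exactly one positive solution `r = g y`,
with `g` increasing and continuous, and every equilibrium is `r = g (χ - ε₃ b)` a.e. Since `b` is
bounded, the mass `χ ↦ ∫_Ω g (χ - ε₃ b)` is continuous (dominated convergence), strictly increasing,
and squeezed between `|Ω| g (χ ∓ |ε₃| B)`; hence it equals `1` for exactly one `χ`.
-/

open MeasureTheory Filter

noncomputable section

section LogAddMul

variable {ε : ℝ}

lemma strictMono_add_mul_exp (hε : 0 < ε) : StrictMono fun t : ℝ => t + ε * Real.exp t :=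
  strictMono_id.add_monotone (Real.exp_monotone.const_mul hε.le)

lemma surjective_add_mul_exp (hε : 0 < ε) :
    Function.Surjective fun t : ℝ => t + ε * Real.exp t := by
  refine Continuous.surjective (by fun_prop) ?_ ?_
  · exact tendsto_atTop_mono (fun t => le_add_of_nonneg_right (by positivity)) tendsto_id
  · simpa using tendsto_id.atBot_add ((Real.tendsto_exp_atBot).const_mul ε)

def addMulExpIso (hε : 0 < ε) : ℝ ≃o ℝ :=
  StrictMono.orderIsoOfSurjective _ (strictMono_add_mul_exp hε) (surjective_add_mul_exp hε)

/-- The unique positive solution `s` of `log s + ε * s = y`. -/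
def logAddMulInv (hε : 0 < ε) (y : ℝ) : ℝ :=
  Real.exp ((addMulExpIso hε).symm y)

lemma logAddMulInv_pos (hε : 0 < ε) (y : ℝ) : 0 < logAddMulInv hε y :=
  Real.exp_pos _

lemma log_logAddMulInv_add (hε : 0 < ε) (y : ℝ) :
    Real.log (logAddMulInv hε y) + ε * logAddMulInv hε y = y := by
  rw [logAddMulInv, Real.log_exp]
  exact (addMulExpIso hε).apply_symm_apply y

lemma logAddMulInv_log_add {s : ℝ} (hε : 0 < ε) (hs : 0 < s) :
    logAddMulInv hε (Real.log s + ε * s) = s := by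
  have : Real.log s + ε * s = addMulExpIso hε (Real.log s) := by
    simp [addMulExpIso, Real.exp_log hs]
  rw [logAddMulInv, this, OrderIso.symm_apply_apply, Real.exp_log hs]

lemma strictMono_logAddMulInv (hε : 0 < ε) : StrictMono (logAddMulInv hε) :=
  Real.exp_strictMono.comp (addMulExpIso hε).symm.strictMono

lemma continuous_logAddMulInv (hε : 0 < ε) : Continuous (logAddMulInv hε) :=
  Real.continuous_exp.comp (addMulExpIso hε).symm.continuous

lemma logAddMulInv_sub_mem_Icc (hε : 0 < ε) {v B : ℝ} (hv : |v| ≤ B) (χ : ℝ) :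
    logAddMulInv hε (χ - v) ∈ Set.Icc (logAddMulInv hε (χ - B)) (logAddMulInv hε (χ + B)) := by
  have := abs_le.1 hv
  exact ⟨(strictMono_logAddMulInv hε).monotone (by linarith),
    (strictMono_logAddMulInv hε).monotone (by linarith)⟩

end LogAddMul

section Equilibrium

variable {α : Type*} [MeasurableSpace α] {μ : Measure α} {ε : ℝ} {V : α → ℝ} {B : ℝ}

def IsEquilibrium (μ : Measure α) (ε : ℝ) (V : α → ℝ) (χ : ℝ) (r : α → ℝ) : Prop :=
  Measurable r ∧ (∀ᵐ x ∂μ, 0 < r x) ∧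
    (∀ᵐ x ∂μ, Real.log (r x) + ε * r x + V x = χ) ∧ ∫ x, r x ∂μ = 1

def equilibriumMass (μ : Measure α) (hε : 0 < ε) (V : α → ℝ) (χ : ℝ) : ℝ :=
  ∫ x, logAddMulInv hε (χ - V x) ∂μ

lemma ae_eq_logAddMulInv_of_ae_eq {r : α → ℝ} {χ : ℝ} (hε : 0 < ε) (hpos : ∀ᵐ x ∂μ, 0 < r x)
    (heq : ∀ᵐ x ∂μ, Real.log (r x) + ε * r x + V x = χ) :
    r =ᵐ[μ] fun x => logAddMulInv hε (χ - V x) := by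
  filter_upwards [hpos, heq] with x hx hxχ
  rw [← hxχ, add_sub_cancel_right, logAddMulInv_log_add hε hx]

lemma integrable_logAddMulInv_sub [IsFiniteMeasure μ] (hε : 0 < ε) (hV : Measurable V)
    (hB : ∀ x, |V x| ≤ B) (χ : ℝ) : Integrable (fun x => logAddMulInv hε (χ - V x)) μ := by
  refine Integrable.mono' (integrable_const (logAddMulInv hε (χ + B)))
    ((continuous_logAddMulInv hε).measurable.comp (measurable_const.sub hV)).aestronglyMeasurable
    (Eventually.of_forall fun x => ?_)
  rw [Real.norm_of_nonneg (logAddMulInv_pos hε _).le]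
  exact (logAddMulInv_sub_mem_Icc hε (hB x) χ).2

lemma strictMono_equilibriumMass [IsFiniteMeasure μ] [NeZero μ] (hε : 0 < ε) (hV : Measurable V)
    (hB : ∀ x, |V x| ≤ B) : StrictMono (equilibriumMass μ hε V) := by
  intro χ₁ χ₂ hχ
  have hint := fun χ => integrable_logAddMulInv_sub (μ := μ) hε hV hB χ
  have hgap : ∀ x, 0 < logAddMulInv hε (χ₂ - V x) - logAddMulInv hε (χ₁ - V x) := fun x =>
    sub_pos.2 (strictMono_logAddMulInv hε (by linarith))
  have hsupp : Function.support
      (fun x => logAddMulInv hε (χ₂ - V x) - logAddMulInv hε (χ₁ - V x)) = Set.univ :=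
    Set.eq_univ_of_forall fun x => (hgap x).ne'
  have hpos := (integral_pos_iff_support_of_nonneg (fun x => (hgap x).le)
    ((hint χ₂).sub (hint χ₁))).2 (by simp [hsupp, NeZero.ne μ])
  rw [integral_sub (hint χ₂) (hint χ₁)] at hpos
  exact sub_pos.1 hpos

lemma continuous_equilibriumMass [IsFiniteMeasure μ] (hε : 0 < ε) (hV : Measurable V)
    (hB : ∀ x, |V x| ≤ B) : Continuous (equilibriumMass μ hε V) := by
  refine continuous_iff_continuousAt.2 fun χ₀ => continuousAt_of_dominated
    (bound := fun _ => logAddMulInv hε (χ₀ + 1 + B))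
    (Eventually.of_forall fun χ => (integrable_logAddMulInv_sub hε hV hB χ).aestronglyMeasurable)
    ?_ (integrable_const _) (Eventually.of_forall fun x =>
      ((continuous_logAddMulInv hε).comp (continuous_sub_right (V x))).continuousAt)
  filter_upwards [Iic_mem_nhds (lt_add_one χ₀)] with χ hχ
  refine Eventually.of_forall fun x => ?_
  rw [Real.norm_of_nonneg (logAddMulInv_pos hε _).le]
  exact (logAddMulInv_sub_mem_Icc hε (hB x) χ).2.trans
    ((strictMono_logAddMulInv hε).monotone (by simpa using hχ))

lemma measureReal_mul_logAddMulInv_le_equilibriumMass [IsFiniteMeasure μ] (hε : 0 < ε)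
    (hV : Measurable V) (hB : ∀ x, |V x| ≤ B) (χ : ℝ) :
    μ.real Set.univ * logAddMulInv hε (χ - B) ≤ equilibriumMass μ hε V χ := by
  rw [← smul_eq_mul, ← integral_const]
  exact integral_mono (integrable_const _) (integrable_logAddMulInv_sub hε hV hB χ)
    fun x => (logAddMulInv_sub_mem_Icc hε (hB x) χ).1

lemma equilibriumMass_le_measureReal_mul_logAddMulInv [IsFiniteMeasure μ] (hε : 0 < ε)
    (hV : Measurable V) (hB : ∀ x, |V x| ≤ B) (χ : ℝ) :
    equilibriumMass μ hε V χ ≤ μ.real Set.univ * logAddMulInv hε (χ + B) := by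
  rw [← smul_eq_mul, ← integral_const]
  exact integral_mono (integrable_logAddMulInv_sub hε hV hB χ) (integrable_const _)
    fun x => (logAddMulInv_sub_mem_Icc hε (hB x) χ).2

lemma exists_equilibriumMass_eq_one [IsFiniteMeasure μ] [NeZero μ] (hε : 0 < ε)
    (hV : Measurable V) (hB : ∀ x, |V x| ≤ B) : ∃ χ, equilibriumMass μ hε V χ = 1 := by
  set m := μ.real Set.univ
  have hm : 0 < m := by simp [m, measureReal_def, ENNReal.toReal_pos_iff, NeZero.ne μ,
    measure_lt_top]
  -- at the level `χ₀` the candidate is the constant density `1 / m`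
  set χ₀ := Real.log (1 / m) + ε * (1 / m)
  have hχ₀ : m * logAddMulInv hε χ₀ = 1 := by
    rw [logAddMulInv_log_add hε (by positivity)]
    field_simp
  have hlow := equilibriumMass_le_measureReal_mul_logAddMulInv (μ := μ) hε hV hB (χ₀ - B)
  have hhigh := measureReal_mul_logAddMulInv_le_equilibriumMass (μ := μ) hε hV hB (χ₀ + B)
  rw [sub_add_cancel] at hlow
  rw [add_sub_cancel_right] at hhigh
  exact intermediate_value_univ (χ₀ - B) (χ₀ + B) (continuous_equilibriumMass hε hV hB)
    ⟨hχ₀ ▸ hlow, hχ₀ ▸ hhigh⟩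

lemma IsEquilibrium.equilibriumMass_eq_one {r : α → ℝ} {χ : ℝ} (hε : 0 < ε)
    (h : IsEquilibrium μ ε V χ r) : equilibriumMass μ hε V χ = 1 := by
  rw [equilibriumMass, ← integral_congr_ae (ae_eq_logAddMulInv_of_ae_eq hε h.2.1 h.2.2.1)]
  exact h.2.2.2

lemma IsEquilibrium.ae_eq [IsFiniteMeasure μ] [NeZero μ] {r₁ r₂ : α → ℝ} {χ₁ χ₂ : ℝ}
    (hε : 0 < ε) (hV : Measurable V) (hB : ∀ x, |V x| ≤ B)
    (h₁ : IsEquilibrium μ ε V χ₁ r₁) (h₂ : IsEquilibrium μ ε V χ₂ r₂) : r₁ =ᵐ[μ] r₂ := by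
  obtain rfl : χ₁ = χ₂ := (strictMono_equilibriumMass hε hV hB).injective
    ((h₁.equilibriumMass_eq_one hε).trans (h₂.equilibriumMass_eq_one hε).symm)
  exact (ae_eq_logAddMulInv_of_ae_eq hε h₁.2.1 h₁.2.2.1).trans
    (ae_eq_logAddMulInv_of_ae_eq hε h₂.2.1 h₂.2.2.1).symm

lemma IsEquilibrium.exists_ae_abs_le {r : α → ℝ} {χ : ℝ} (hε : 0 < ε) (hB : ∀ x, |V x| ≤ B)
    (h : IsEquilibrium μ ε V χ r) : ∃ M, ∀ᵐ x ∂μ, |r x| ≤ M := by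
  refine ⟨logAddMulInv hε (χ + B), ?_⟩
  filter_upwards [ae_eq_logAddMulInv_of_ae_eq hε h.2.1 h.2.2.1] with x hx
  rw [hx, abs_of_pos (logAddMulInv_pos hε _)]
  exact (logAddMulInv_sub_mem_Icc hε (hB x) χ).2

theorem existsUnique_isEquilibrium [IsFiniteMeasure μ] [NeZero μ] (hε : 0 < ε)
    (hV : Measurable V) (hB : ∀ x, |V x| ≤ B) : ∃! χ, ∃ r, IsEquilibrium μ ε V χ r := by
  obtain ⟨χ, hχ⟩ := exists_equilibriumMass_eq_one (μ := μ) hε hV hB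
  refine ⟨χ, ⟨_, ?_, Eventually.of_forall fun _ => logAddMulInv_pos hε _, ?_, hχ⟩, ?_⟩
  · exact (continuous_logAddMulInv hε).measurable.comp (measurable_const.sub hV)
  · exact Eventually.of_forall fun x => by rw [log_logAddMulInv_add, sub_add_cancel]
  · rintro χ' ⟨r, hr⟩
    exact (strictMono_equilibriumMass hε hV hB).injective
      ((hr.equilibriumMass_eq_one hε).trans hχ.symm)

end Equilibrium

end

theorem equilibrium_pair1_exists_unique_general
    (d : ℕ) (Ω : Set (EuclideanSpace ℝ (Fin d)))
    (hΩpos : 0 < volume Ω) (hΩfin : volume Ω < ⊤)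
    (b : EuclideanSpace ℝ (Fin d) → ℝ) (hbmeas : Measurable b)
    (B : ℝ) (hbB : ∀ x, |b x| ≤ B)
    (ε₁ ε₃ : ℝ) (hε₁ : 0 < ε₁) :
    (∃! χ : ℝ, ∃ r : EuclideanSpace ℝ (Fin d) → ℝ, Measurable r ∧
        (∀ᵐ x ∂(volume.restrict Ω), 0 < r x) ∧
        (∀ᵐ x ∂(volume.restrict Ω), Real.log (r x) + ε₁ * r x + ε₃ * b x = χ) ∧
        ∫ x, r x ∂(volume.restrict Ω) = 1) ∧
    (∀ χ₁ χ₂ : ℝ, ∀ r₁ r₂ : EuclideanSpace ℝ (Fin d) → ℝ,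
      (Measurable r₁ ∧ (∀ᵐ x ∂(volume.restrict Ω), 0 < r₁ x) ∧
        (∀ᵐ x ∂(volume.restrict Ω), Real.log (r₁ x) + ε₁ * r₁ x + ε₃ * b x = χ₁) ∧
        ∫ x, r₁ x ∂(volume.restrict Ω) = 1) →
      (Measurable r₂ ∧ (∀ᵐ x ∂(volume.restrict Ω), 0 < r₂ x) ∧
        (∀ᵐ x ∂(volume.restrict Ω), Real.log (r₂ x) + ε₁ * r₂ x + ε₃ * b x = χ₂) ∧
        ∫ x, r₂ x ∂(volume.restrict Ω) = 1) →
      r₁ =ᵐ[volume.restrict Ω] r₂) ∧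
    (∀ χ : ℝ, ∀ r : EuclideanSpace ℝ (Fin d) → ℝ,
      (Measurable r ∧ (∀ᵐ x ∂(volume.restrict Ω), 0 < r x) ∧
        (∀ᵐ x ∂(volume.restrict Ω), Real.log (r x) + ε₁ * r x + ε₃ * b x = χ) ∧
        ∫ x, r x ∂(volume.restrict Ω) = 1) →
      ∃ M : ℝ, ∀ᵐ x ∂(volume.restrict Ω), |r x| ≤ M) := by
  have : IsFiniteMeasure (volume.restrict Ω) := isFiniteMeasure_restrict.2 hΩfin.ne
  have : NeZero (volume.restrict Ω) := ⟨by simpa [Measure.restrict_eq_zero] using hΩpos.ne'⟩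
  have hV : Measurable fun x => ε₃ * b x := hbmeas.const_mul ε₃
  have hVB : ∀ x, |ε₃ * b x| ≤ |ε₃| * B := fun x => by
    rw [abs_mul]; exact mul_le_mul_of_nonneg_left (hbB x) (abs_nonneg _)
  exact ⟨existsUnique_isEquilibrium hε₁ hV hVB,
    fun _ _ _ _ h₁ h₂ => IsEquilibrium.ae_eq hε₁ hV hVB h₁ h₂,
    fun _ _ h => IsEquilibrium.exists_ae_abs_le hε₁ hVB h⟩

/-- Existence and uniqueness of the bounded equilibrium of the first entropy–mobility
pair: there is a unique constant χ for which the entropy variable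
u₁ = log r + ε₁ r + ε₃ b equals χ a.e. for some positive normalized density r; moreover
this r is a.e. unique and essentially bounded (Sections 2.1 and 4.1.2 of the paper). -/
theorem equilibrium_pair1_exists_unique
    (d : ℕ) (Ω : Set (EuclideanSpace ℝ (Fin d))) (hΩ : MeasurableSet Ω)
    (hΩpos : 0 < volume Ω) (hΩfin : volume Ω < ⊤)
    (b : EuclideanSpace ℝ (Fin d) → ℝ) (hbmeas : Measurable b)
    (B : ℝ) (hbB : ∀ x, |b x| ≤ B)
    (hb0 : ∀ᵐ x ∂(volume.restrict Ω), 0 ≤ b x)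
    (ε₁ ε₃ : ℝ) (hε₁ : 0 < ε₁) (hε₃ : 0 < ε₃) :
    (∃! χ : ℝ, ∃ r : EuclideanSpace ℝ (Fin d) → ℝ, Measurable r ∧
        (∀ᵐ x ∂(volume.restrict Ω), 0 < r x) ∧
        (∀ᵐ x ∂(volume.restrict Ω), Real.log (r x) + ε₁ * r x + ε₃ * b x = χ) ∧
        ∫ x, r x ∂(volume.restrict Ω) = 1) ∧
    (∀ χ₁ χ₂ : ℝ, ∀ r₁ r₂ : EuclideanSpace ℝ (Fin d) → ℝ,
      (Measurable r₁ ∧ (∀ᵐ x ∂(volume.restrict Ω), 0 < r₁ x) ∧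
        (∀ᵐ x ∂(volume.restrict Ω), Real.log (r₁ x) + ε₁ * r₁ x + ε₃ * b x = χ₁) ∧
        ∫ x, r₁ x ∂(volume.restrict Ω) = 1) →
      (Measurable r₂ ∧ (∀ᵐ x ∂(volume.restrict Ω), 0 < r₂ x) ∧
        (∀ᵐ x ∂(volume.restrict Ω), Real.log (r₂ x) + ε₁ * r₂ x + ε₃ * b x = χ₂) ∧
        ∫ x, r₂ x ∂(volume.restrict Ω) = 1) →
      r₁ =ᵐ[volume.restrict Ω] r₂) ∧
    (∀ χ : ℝ, ∀ r : EuclideanSpace ℝ (Fin d) → ℝ,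
      (Measurable r ∧ (∀ᵐ x ∂(volume.restrict Ω), 0 < r x) ∧
        (∀ᵐ x ∂(volume.restrict Ω), Real.log (r x) + ε₁ * r x + ε₃ * b x = χ) ∧
        ∫ x, r x ∂(volume.restrict Ω) = 1) →
      ∃ M : ℝ, ∀ᵐ x ∂(volume.restrict Ω), |r x| ≤ M) :=
  equilibrium_pair1_exists_unique_general d Ω hΩpos hΩfin b hbmeas B hbB ε₁ ε₃ hε₁
end

section
/- Let Ω ⊆ ℝᵈ be a Lebesgue-measurable set with Lebesgue measure |Ω| = 1, and let b : Ω → [0, B] be a measurable function with ∫_Ω b(x) dx = 1. For ε₁, ε₃ > 0 let r_{ε₁,ε₃} : Ω → (0, ∞) denote the a.e.-unique measurable function such that log r_{ε₁,ε₃} + ε₁ r_{ε₁,ε₃} + ε₃ b is a.e. equal to a constant on Ω and ∫_Ω r_{ε₁,ε₃} = 1. Then there exist ε₀ > 0 and C > 0 such that for all ε₁, ε₃ ∈ (0, ε₀] one has ess sup_{x ∈ Ω} | r_{ε₁,ε₃}(x) − 1 − ε₃ (1 − b(x)) | ≤ C (ε₁ + ε₃)². -/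
/-!
Integrating the equilibrium relation `log r + ε₁ r + ε₃ b = χ` against the unit masses of `r`
and `b` gives `∫ log r = χ - ε₁ - ε₃`. Since `∫ r = 1`, there are points with `r ≤ 1` and
points with `r ≥ 1`; evaluating the relation there traps `χ` in `[ε₁, ε₁ + ε₃ B]`, hence
`|log r| ≤ M := ε₁ + ε₃ B` a.e. Since `exp t = 1 + t + O(t²)`, both `r - 1 - log r` and
`∫ log r = ∫ (log r - (r - 1))` are `O(M²)`, and the relation rewrites `r - 1 - ε₃ (1 - b)` as
`(r - 1 - log r) + ∫ log r - ε₁ (r - 1) = O(M²)`.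
-/

open MeasureTheory Real

lemma abs_sub_one_sub_log_le_sq {ρ M : ℝ} (hρ : 0 < ρ) (hM : M ≤ 1) (hlog : |log ρ| ≤ M) :
    |ρ - 1 - log ρ| ≤ M ^ 2 := by
  have h := abs_exp_sub_one_sub_id_le (hlog.trans hM)
  rw [exp_log hρ] at h
  exact h.trans (sq_le_sq' (abs_le.mp hlog).1 (abs_le.mp hlog).2)

lemma abs_log_le_of_log_add_mul_add_mul_eq {ε₁ ε₃ B β χ ρ : ℝ} (hε₁ : 0 ≤ ε₁) (hε₃ : 0 ≤ ε₃)
    (hβ : β ∈ Set.Icc 0 B) (hχ : χ ∈ Set.Icc ε₁ (ε₁ + ε₃ * B)) (hM : ε₁ + ε₃ * B ≤ 1 / 2)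
    (hρ : 0 < ρ) (h : log ρ + ε₁ * ρ + ε₃ * β = χ) : |log ρ| ≤ ε₁ + ε₃ * B := by
  have hεβ : 0 ≤ ε₃ * β := mul_nonneg hε₃ hβ.1
  have hεβB : ε₃ * β ≤ ε₃ * B := mul_le_mul_of_nonneg_left hβ.2 hε₃
  have hlog_le : log ρ ≤ ε₁ + ε₃ * B := by nlinarith [hχ.2]
  have hρ_le : ρ ≤ 2 := by
    rw [← log_le_log_iff hρ two_pos]
    linarith [log_two_gt_d9]
  rw [abs_le]
  constructor <;> nlinarith [hχ.1]

section ProbabilityMeasure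

variable {α : Type*} [MeasurableSpace α] {μ : Measure α} [IsProbabilityMeasure μ]

lemma frequently_le_integral {f : α → ℝ} (hf : Integrable f μ) :
    ∃ᵐ x ∂μ, f x ≤ ∫ a, f a ∂μ :=
  frequently_ae_iff.mpr (measure_le_integral_pos hf).ne'

lemma frequently_integral_le {f : α → ℝ} (hf : Integrable f μ) :
    ∃ᵐ x ∂μ, ∫ a, f a ∂μ ≤ f x :=
  frequently_ae_iff.mpr (measure_integral_le_pos hf).ne'

lemma abs_integral_log_le_sq {r : α → ℝ} {M : ℝ} (hM : M ≤ 1) (hrpos : ∀ᵐ x ∂μ, 0 < r x)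
    (hlog : ∀ᵐ x ∂μ, |log (r x)| ≤ M) (hr : ∫ x, r x ∂μ = 1) :
    |∫ x, log (r x) ∂μ| ≤ M ^ 2 := by
  by_cases hlog_int : Integrable (fun x ↦ log (r x)) μ
  swap
  · rw [integral_undef hlog_int, abs_zero]
    positivity
  have hr_int : Integrable r μ := .of_integral_ne_zero (by simp [hr])
  have hr_sub_int : Integrable (fun x ↦ r x - 1) μ := hr_int.sub (integrable_const 1)
  have h_eq : ∫ x, log (r x) ∂μ = ∫ x, (log (r x) - (r x - 1)) ∂μ := by
    rw [integral_sub hlog_int hr_sub_int,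
      integral_sub (g := fun _ ↦ 1) hr_int (integrable_const 1), hr]
    simp
  rw [h_eq, ← norm_eq_abs]
  refine (norm_integral_le_of_norm_le_const (C := M ^ 2) ?_).trans_eq (by simp)
  filter_upwards [hrpos, hlog] with x hx hxlog
  rw [norm_eq_abs, abs_sub_comm]
  exact abs_sub_one_sub_log_le_sq hx hM hxlog

variable {ε₁ ε₃ B χ : ℝ} {b r : α → ℝ}

lemma equilibrium_constant_mem_Icc (hε₁ : 0 ≤ ε₁) (hε₃ : 0 ≤ ε₃)
    (hb : ∀ᵐ x ∂μ, b x ∈ Set.Icc 0 B) (hrpos : ∀ᵐ x ∂μ, 0 < r x)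
    (hχ : ∀ᵐ x ∂μ, log (r x) + ε₁ * r x + ε₃ * b x = χ) (hr : ∫ x, r x ∂μ = 1) :
    χ ∈ Set.Icc ε₁ (ε₁ + ε₃ * B) := by
  have hr_int : Integrable r μ := .of_integral_ne_zero (by simp [hr])
  constructor
  · obtain ⟨x, hx1, hb, hx, hxχ⟩ :=
      ((frequently_integral_le hr_int).and_eventually (hb.and (hrpos.and hχ))).exists
    rw [hr] at hx1
    nlinarith [log_nonneg hx1, mul_nonneg hε₃ hb.1]
  · obtain ⟨x, hx1, hb, hx, hxχ⟩ :=
      ((frequently_le_integral hr_int).and_eventually (hb.and (hrpos.and hχ))).exists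
    rw [hr] at hx1
    nlinarith [log_nonpos hx.le hx1, mul_le_mul_of_nonneg_left hb.2 hε₃]

lemma integral_log_of_equilibrium (hbint : ∫ x, b x ∂μ = 1)
    (hχ : ∀ᵐ x ∂μ, log (r x) + ε₁ * r x + ε₃ * b x = χ) (hr : ∫ x, r x ∂μ = 1) :
    ∫ x, log (r x) ∂μ = χ - ε₁ - ε₃ := by
  have hr_int : Integrable r μ := .of_integral_ne_zero (by simp [hr])
  have hb_int : Integrable b μ := .of_integral_ne_zero (by simp [hbint])
  calc ∫ x, log (r x) ∂μ = ∫ x, (χ - ε₁ * r x - ε₃ * b x) ∂μ :=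
        integral_congr_ae (by filter_upwards [hχ] with x hx; linarith)
    _ = χ - ε₁ - ε₃ := by
        rw [integral_sub (f := fun x ↦ χ - ε₁ * r x)
            ((integrable_const χ).sub (hr_int.const_mul ε₁)) (hb_int.const_mul ε₃),
          integral_sub (integrable_const χ) (hr_int.const_mul ε₁), integral_const_mul,
          integral_const_mul, hr, hbint]
        simp

theorem ae_abs_sub_one_sub_le_of_equilibrium (hε₁ : 0 ≤ ε₁) (hε₃ : 0 ≤ ε₃)
    (hM : ε₁ + ε₃ * B ≤ 1 / 2) (hb : ∀ᵐ x ∂μ, b x ∈ Set.Icc 0 B) (hbint : ∫ x, b x ∂μ = 1)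
    (hrpos : ∀ᵐ x ∂μ, 0 < r x) (hχ : ∀ᵐ x ∂μ, log (r x) + ε₁ * r x + ε₃ * b x = χ)
    (hr : ∫ x, r x ∂μ = 1) :
    ∀ᵐ x ∂μ, |r x - 1 - ε₃ * (1 - b x)| ≤ 4 * (ε₁ + ε₃ * B) ^ 2 := by
  set M := ε₁ + ε₃ * B
  have hχI := equilibrium_constant_mem_Icc hε₁ hε₃ hb hrpos hχ hr
  have hε₁M : ε₁ ≤ M := hχI.1.trans hχI.2
  have hlog : ∀ᵐ x ∂μ, |log (r x)| ≤ M := by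
    filter_upwards [hb, hrpos, hχ] with x hbx hx hxχ
    exact abs_log_le_of_log_add_mul_add_mul_eq hε₁ hε₃ hbx hχI hM hx hxχ
  have hI := abs_integral_log_le_sq (by linarith) hrpos hlog hr
  rw [integral_log_of_equilibrium hbint hχ hr] at hI
  filter_upwards [hrpos, hχ, hlog] with x hx hxχ hxlog
  have hquad := abs_sub_one_sub_log_le_sq hx (by linarith) hxlog
  have hlin : |r x - 1| ≤ 2 * M := by
    calc |r x - 1| = |(r x - 1 - log (r x)) + log (r x)| := by ring_nf
      _ ≤ M ^ 2 + M := (abs_add_le _ _).trans (add_le_add hquad hxlog)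
      _ ≤ 2 * M := by nlinarith
  calc |r x - 1 - ε₃ * (1 - b x)|
      = |(r x - 1 - log (r x)) + (χ - ε₁ - ε₃) - ε₁ * (r x - 1)| := by
        rw [← hxχ]; ring_nf
    _ ≤ |r x - 1 - log (r x)| + |χ - ε₁ - ε₃| + |ε₁ * (r x - 1)| :=
        (abs_sub _ _).trans (add_le_add_left (abs_add_le _ _) _)
    _ ≤ M ^ 2 + M ^ 2 + M * (2 * M) := by
        rw [abs_mul, abs_of_nonneg hε₁]
        gcongr
        exact hε₁.trans hε₁M
    _ = 4 * M ^ 2 := by ring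

end ProbabilityMeasure

theorem equilibrium_pair1_expansion_general
    (d : ℕ) (Ω : Set (EuclideanSpace ℝ (Fin d)))
    (hΩvol : volume Ω = 1)
    (B : ℝ) (b : EuclideanSpace ℝ (Fin d) → ℝ)
    (hb0 : ∀ x, 0 ≤ b x) (hbB : ∀ x, b x ≤ B)
    (hbint : ∫ x, b x ∂(volume.restrict Ω) = 1) :
    ∃ ε₀ > (0 : ℝ), ∃ C > (0 : ℝ),
      ∀ ε₁ ε₃ : ℝ, 0 < ε₁ → ε₁ ≤ ε₀ → 0 < ε₃ → ε₃ ≤ ε₀ →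
      ∀ χ : ℝ, ∀ r : EuclideanSpace ℝ (Fin d) → ℝ,
        Measurable r →
        (∀ᵐ x ∂(volume.restrict Ω), 0 < r x) →
        (∀ᵐ x ∂(volume.restrict Ω), Real.log (r x) + ε₁ * r x + ε₃ * b x = χ) →
        ∫ x, r x ∂(volume.restrict Ω) = 1 →
        ∀ᵐ x ∂(volume.restrict Ω),
          |r x - 1 - ε₃ * (1 - b x)| ≤ C * (ε₁ + ε₃) ^ 2 := by
  have hB : 0 ≤ B := (hb0 0).trans (hbB 0)
  refine ⟨1 / (4 * (1 + B)), by positivity, 4 * (1 + B) ^ 2, by positivity, ?_⟩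
  intro ε₁ ε₃ hε₁ hε₁₀ hε₃ hε₃₀ χ r _ hrpos hχ hr
  have : IsProbabilityMeasure (volume.restrict Ω) := ⟨by simpa using hΩvol⟩
  rw [le_div_iff₀ (by positivity)] at hε₁₀ hε₃₀
  have hMδ : ε₁ + ε₃ * B ≤ (1 + B) * (ε₁ + ε₃) := by nlinarith
  have hδ : (1 + B) * (ε₁ + ε₃) ≤ 1 / 2 := by linarith
  filter_upwards [ae_abs_sub_one_sub_le_of_equilibrium hε₁.le hε₃.le (hMδ.trans hδ)
    (ae_of_all _ fun x ↦ ⟨hb0 x, hbB x⟩) hbint hrpos hχ hr] with x hx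
  calc |r x - 1 - ε₃ * (1 - b x)| ≤ 4 * (ε₁ + ε₃ * B) ^ 2 := hx
    _ ≤ 4 * ((1 + B) * (ε₁ + ε₃)) ^ 2 := by gcongr
    _ = 4 * (1 + B) ^ 2 * (ε₁ + ε₃) ^ 2 := by ring

/-- Rigorous form of the asymptotic expansion (2.7) of the paper for the equilibrium of
the first entropy–mobility pair: for small ε₁, ε₃, any normalized positive density whose
entropy variable log r + ε₁ r + ε₃ b is a.e. constant satisfies
r = 1 + ε₃(1 - b) + O((ε₁ + ε₃)²) uniformly a.e. -/
theorem equilibrium_pair1_expansion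
    (d : ℕ) (Ω : Set (EuclideanSpace ℝ (Fin d))) (hΩ : MeasurableSet Ω)
    (hΩvol : volume Ω = 1)
    (B : ℝ) (b : EuclideanSpace ℝ (Fin d) → ℝ) (hbmeas : Measurable b)
    (hb0 : ∀ x, 0 ≤ b x) (hbB : ∀ x, b x ≤ B)
    (hbint : ∫ x, b x ∂(volume.restrict Ω) = 1) :
    ∃ ε₀ > (0 : ℝ), ∃ C > (0 : ℝ),
      ∀ ε₁ ε₃ : ℝ, 0 < ε₁ → ε₁ ≤ ε₀ → 0 < ε₃ → ε₃ ≤ ε₀ →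
      ∀ χ : ℝ, ∀ r : EuclideanSpace ℝ (Fin d) → ℝ,
        Measurable r →
        (∀ᵐ x ∂(volume.restrict Ω), 0 < r x) →
        (∀ᵐ x ∂(volume.restrict Ω), Real.log (r x) + ε₁ * r x + ε₃ * b x = χ) →
        ∫ x, r x ∂(volume.restrict Ω) = 1 →
        ∀ᵐ x ∂(volume.restrict Ω),
          |r x - 1 - ε₃ * (1 - b x)| ≤ C * (ε₁ + ε₃) ^ 2 :=
  equilibrium_pair1_expansion_general d Ω hΩvol B b hb0 hbB hbint
end

section
/- Let Ω ⊆ ℝᵈ be a Lebesgue-measurable set with 0 < |Ω| < ∞, let b : Ω → ℝ be a bounded measurable function with b ≥ 0 a.e., and let ε₁ > 0 and ε₃ > 0 satisfy ε₃ · ess sup b < 1 and ∫_Ω (1 − ε₃ b(x))/ε₁ dx > 1. Then there exists a unique constant χ ∈ ℝ for which there exists a measurable function r : Ω → ℝ with 0 < r(x) < (1 − ε₃ b(x))/ε₁ a.e., log( r(x)/(1 − ε₁ r(x) − ε₃ b(x)) ) + ε₁ r(x)/(1 − ε₁ r(x) − ε₃ b(x)) = χ for a.e. x ∈ Ω, and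 ∫_Ω r(x) dx = 1; moreover this r is uniquely determined up to a.e. equality. -/
open MeasureTheory

noncomputable def gfun (s : ℝ) : ℝ := Real.log s - Real.log (1 - s) + s / (1 - s)

lemma gfun_strictMonoOn : StrictMonoOn gfun (Set.Ioo (0:ℝ) 1) := by
  intro s hs t ht hst
  obtain ⟨hs0, hs1⟩ := hs
  obtain ⟨ht0, ht1⟩ := ht
  have h1s : 0 < 1 - s := by linarith
  have h1t : 0 < 1 - t := by linarith
  have hlog1 : Real.log s < Real.log t := Real.log_lt_log hs0 hst
  have hlog2 : Real.log (1 - t) < Real.log (1 - s) := Real.log_lt_log h1t (by linarith)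
  have hdiv : s / (1 - s) < t / (1 - t) := by
    rw [div_lt_div_iff₀ h1s h1t]; nlinarith
  unfold gfun; linarith

lemma calc_key (ε₁ a s : ℝ) (hε₁ : 0 < ε₁) (ha : 0 < a) (hs0 : 0 < s) (hs1 : s < 1) :
    Real.log ((a * s / ε₁) / (a - ε₁ * (a * s / ε₁)))
      + ε₁ * (a * s / ε₁) / (a - ε₁ * (a * s / ε₁)) = gfun s - Real.log ε₁ := by
  have h1s : 0 < 1 - s := by linarith
  have hden : a - ε₁ * (a * s / ε₁) = a * (1 - s) := by field_simp
  rw [hden]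
  have h2 : ε₁ * (a * s / ε₁) = a * s := by field_simp
  rw [h2]
  have h3 : (a * s / ε₁) / (a * (1 - s)) = s / (ε₁ * (1 - s)) := by
    field_simp
  have h4 : a * s / (a * (1 - s)) = s / (1 - s) := by
    rw [mul_div_mul_left _ _ (ne_of_gt ha)]
  rw [h3, h4, Real.log_div (ne_of_gt hs0) (by positivity),
    Real.log_mul (ne_of_gt hε₁) (ne_of_gt h1s)]
  unfold gfun; ring

/-- Existence and uniqueness of the equilibrium of the second entropy–mobility pair:
there is a unique constant χ for which the entropy variable
u₂ = log(r/(1-ε₁r-ε₃b)) + ε₁r/(1-ε₁r-ε₃b) equals χ a.e. for some normalized density r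
staying in the admissible set 0 < r < (1-ε₃b)/ε₁; moreover this r is a.e. unique
(Sections 2.1 and 3 of the paper). -/
theorem equilibrium_pair2_exists_unique
    (d : ℕ) (Ω : Set (EuclideanSpace ℝ (Fin d))) (hΩ : MeasurableSet Ω)
    (hΩpos : 0 < volume Ω) (hΩfin : volume Ω < ⊤)
    (b : EuclideanSpace ℝ (Fin d) → ℝ) (hbmeas : Measurable b)
    (B : ℝ) (hbB : ∀ x, |b x| ≤ B)
    (hb0 : ∀ᵐ x ∂(volume.restrict Ω), 0 ≤ b x)
    (ε₁ ε₃ : ℝ) (hε₁ : 0 < ε₁) (hε₃ : 0 < ε₃)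
    (hsup : ε₃ * essSup b (volume.restrict Ω) < 1)
    (hmass : 1 < ∫ x, (1 - ε₃ * b x) / ε₁ ∂(volume.restrict Ω)) :
    (∃! χ : ℝ, ∃ r : EuclideanSpace ℝ (Fin d) → ℝ, Measurable r ∧
        (∀ᵐ x ∂(volume.restrict Ω), 0 < r x ∧ r x < (1 - ε₃ * b x) / ε₁) ∧
        (∀ᵐ x ∂(volume.restrict Ω),
          Real.log (r x / (1 - ε₁ * r x - ε₃ * b x))
            + ε₁ * r x / (1 - ε₁ * r x - ε₃ * b x) = χ) ∧
        ∫ x, r x ∂(volume.restrict Ω) = 1) ∧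
    (∀ χ₁ χ₂ : ℝ, ∀ r₁ r₂ : EuclideanSpace ℝ (Fin d) → ℝ,
      (Measurable r₁ ∧ (∀ᵐ x ∂(volume.restrict Ω), 0 < r₁ x ∧ r₁ x < (1 - ε₃ * b x) / ε₁) ∧
        (∀ᵐ x ∂(volume.restrict Ω),
          Real.log (r₁ x / (1 - ε₁ * r₁ x - ε₃ * b x))
            + ε₁ * r₁ x / (1 - ε₁ * r₁ x - ε₃ * b x) = χ₁) ∧
        ∫ x, r₁ x ∂(volume.restrict Ω) = 1) →
      (Measurable r₂ ∧ (∀ᵐ x ∂(volume.restrict Ω), 0 < r₂ x ∧ r₂ x < (1 - ε₃ * b x) / ε₁) ∧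
        (∀ᵐ x ∂(volume.restrict Ω),
          Real.log (r₂ x / (1 - ε₁ * r₂ x - ε₃ * b x))
            + ε₁ * r₂ x / (1 - ε₁ * r₂ x - ε₃ * b x) = χ₂) ∧
        ∫ x, r₂ x ∂(volume.restrict Ω) = 1) →
      r₁ =ᵐ[volume.restrict Ω] r₂) := by
  set μ := volume.restrict Ω with hμdef
  have hμne : μ ≠ 0 := by
    intro h0
    have h1 : μ Ω = volume Ω := Measure.restrict_apply_self _ _
    rw [h0] at h1
    simp at h1
    exact hΩpos.ne' h1.symm
  haveI : (ae μ).NeBot := ae_neBot.mpr hμne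
  set M := ∫ x, (1 - ε₃ * b x) / ε₁ ∂μ with hMdef
  have hM1 : 1 < M := hmass
  have hMpos : 0 < M := by linarith
  have hMne : M ≠ 0 := ne_of_gt hMpos
  have hs₀0 : 0 < 1 / M := by positivity
  have hs₀1 : 1 / M < 1 := by rw [div_lt_one hMpos]; exact hM1
  have hbdd : Filter.IsBoundedUnder (· ≤ ·) (ae μ) b :=
    Filter.isBoundedUnder_of ⟨B, fun x => (abs_le.mp (hbB x)).2⟩
  have hA : ∀ᵐ x ∂μ, 0 < 1 - ε₃ * b x := by
    filter_upwards [ae_le_essSup hbdd] with x hx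
    have h2 : ε₃ * b x ≤ ε₃ * essSup b μ := mul_le_mul_of_nonneg_left hx hε₃.le
    linarith
  -- key extraction lemma
  have key : ∀ (χ : ℝ) (r : EuclideanSpace ℝ (Fin d) → ℝ),
      (∀ᵐ x ∂μ, 0 < r x ∧ r x < (1 - ε₃ * b x) / ε₁) →
      (∀ᵐ x ∂μ, Real.log (r x / (1 - ε₁ * r x - ε₃ * b x))
          + ε₁ * r x / (1 - ε₁ * r x - ε₃ * b x) = χ) →
      (∫ x, r x ∂μ = 1) →
      (r =ᵐ[μ] fun x => (1 - ε₃ * b x) * (1 / M) / ε₁) ∧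
        χ = gfun (1 / M) - Real.log ε₁ := by
    intro χ r hbnd heq hint
    have hs : ∀ᵐ x ∂μ, (ε₁ * r x / (1 - ε₃ * b x)) ∈ Set.Ioo (0:ℝ) 1 ∧
        gfun (ε₁ * r x / (1 - ε₃ * b x)) = χ + Real.log ε₁ := by
      filter_upwards [hbnd, heq] with x hx he
      obtain ⟨hr0, hr1⟩ := hx
      have ha : 0 < 1 - ε₃ * b x := by
        by_contra h
        push_neg at h
        have : (1 - ε₃ * b x) / ε₁ ≤ 0 := div_nonpos_of_nonpos_of_nonneg h hε₁.le
        linarith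
      set a := 1 - ε₃ * b x with hadef
      set s := ε₁ * r x / a with hsdef
      have hslt : s < 1 := by
        rw [hsdef, div_lt_one ha]
        have := (lt_div_iff₀ hε₁).mp hr1
        linarith
      have hsp : 0 < s := by positivity
      have hrx : r x = a * s / ε₁ := by rw [hsdef]; field_simp
      refine ⟨⟨hsp, hslt⟩, ?_⟩
      have hck := calc_key ε₁ a s hε₁ ha hsp hslt
      rw [← hrx] at hck
      have hden : a - ε₁ * r x = 1 - ε₁ * r x - ε₃ * b x := by rw [hadef]; ring
      rw [hden] at hck
      linarith
    obtain ⟨x₀, hx₀⟩ := hs.exists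
    set t := ε₁ * r x₀ / (1 - ε₃ * b x₀) with htdef
    have ht : t ∈ Set.Ioo (0:ℝ) 1 := hx₀.1
    have hgt : gfun t = χ + Real.log ε₁ := hx₀.2
    have hr_eq : r =ᵐ[μ] fun x => (1 - ε₃ * b x) * t / ε₁ := by
      filter_upwards [hs, hA] with x hx hax
      obtain ⟨hx1, hx2⟩ := hx
      have hst : ε₁ * r x / (1 - ε₃ * b x) = t :=
        gfun_strictMonoOn.injOn hx1 ht (by rw [hx2, hgt])
      rw [← hst]
      field_simp
    have hint2 : ∫ x, r x ∂μ = t * M := by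
      rw [integral_congr_ae hr_eq,
        show (fun x => (1 - ε₃ * b x) * t / ε₁) = fun x => t * ((1 - ε₃ * b x) / ε₁) from
          funext fun x => by ring,
        integral_const_mul _ _]
    rw [hint] at hint2
    have htM : t = 1 / M := by rw [eq_div_iff hMne]; linarith
    rw [htM] at hr_eq hgt
    exact ⟨hr_eq, by linarith⟩
  constructor
  · refine ⟨gfun (1 / M) - Real.log ε₁,
      ⟨fun x => (1 - ε₃ * b x) * (1 / M) / ε₁, ?_, ?_, ?_, ?_⟩, ?_⟩
    · fun_prop
    · filter_upwards [hA] with x hax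
      refine ⟨by positivity, ?_⟩
      rw [div_lt_div_iff₀ hε₁ hε₁]
      nlinarith [mul_pos hax hε₁]
    · filter_upwards [hA] with x hax
      have hck := calc_key ε₁ (1 - ε₃ * b x) (1 / M) hε₁ hax hs₀0 hs₀1
      rw [show (1 - ε₁ * ((1 - ε₃ * b x) * (1 / M) / ε₁) - ε₃ * b x)
            = ((1 - ε₃ * b x) - ε₁ * ((1 - ε₃ * b x) * (1 / M) / ε₁)) from by ring]
      exact hck
    · rw [show (fun x => (1 - ε₃ * b x) * (1 / M) / ε₁)
            = fun x => (1 / M) * ((1 - ε₃ * b x) / ε₁) from funext fun x => by ring,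
        integral_const_mul _ _, ← hMdef]
      field_simp
    · rintro χ' ⟨r', _, h2, h3, h4⟩
      exact (key χ' r' h2 h3 h4).2
  · rintro χ₁ χ₂ r₁ r₂ ⟨_, h12, h13, h14⟩ ⟨_, h22, h23, h24⟩
    exact ((key χ₁ r₁ h12 h13 h14).1).trans ((key χ₂ r₂ h22 h23 h24).1).symm
end

section
/- Let Ω ⊆ ℝᵈ be a Lebesgue-measurable set with Lebesgue measure |Ω| = 1, and let b : Ω → [0, B] be a measurable function with ∫_Ω b(x) dx = 1. Then there exist ε₀ > 0 and C > 0 such that for all ε₁, ε₃ ∈ (0, ε₀] the following holds: there is an a.e.-unique measurable function r : Ω → ℝ with 0 < r < (1 − ε₃ b)/ε₁ a.e., with log( r/(1 − ε₁ r − ε₃ b) ) + ε₁ r/(1 − ε₁ r − ε₃ b) a.e. equal to a constant on Ω, and with ∫_Ω r = 1; and this r satisfies ess sup_{x ∈ Ω} | r(x) − 1 − ε₃ (1 − b(x)) | ≤ C (ε₁ + ε₃)². -/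
/-!
With `q = r / (1 - ε₁ r - ε₃ b)` the entropy variable is `log q + ε₁ q`, which is strictly
increasing in `q > 0`; so `u₂` is a.e. constant exactly when `q` is, i.e. when
`r = κ (1 - ε₃ b)` with `κ = q / (1 + ε₁ q)`. Since `|Ω| = 1` and `∫ b = 1`, the normalization
forces `κ = 1 / (1 - ε₃)`. Hence the equilibrium is explicitly `r = (1 - ε₃ b) / (1 - ε₃)`,
and `r - 1 - ε₃ (1 - b) = ε₃² (1 - b) / (1 - ε₃)`.
-/

open MeasureTheory Set

namespace EntropyPair2

lemma strictMonoOn_log_add_mul {c : ℝ} (hc : 0 ≤ c) :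
    StrictMonoOn (fun q => Real.log q + c * q) (Ioi 0) :=
  Real.strictMonoOn_log.add_monotone ((monotone_mul_left_of_nonneg hc).monotoneOn _)

lemma pos_and_eq_div_one_add_mul_mul_of_div_eq {ε c r q : ℝ} (hε : 0 < ε) (hr : 0 < r)
    (hrc : r < (1 - c) / ε) (hq : r / (1 - ε * r - c) = q) :
    0 < q ∧ r = q / (1 + ε * q) * (1 - c) := by
  have hs : 0 < 1 - ε * r - c := by rw [lt_div_iff₀ hε] at hrc; linarith
  have hc : 0 < 1 - c := by nlinarith
  subst hq
  refine ⟨div_pos hr hs, ?_⟩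
  have hden : 1 + ε * (r / (1 - ε * r - c)) = (1 - c) / (1 - ε * r - c) := by
    field_simp
    ring
  rw [hden]
  field_simp
  exact (div_self (by linarith)).symm

lemma abs_div_one_sub_sub_le {ε β K : ℝ} (hε : ε ≤ 1 / 2) (hβ : |1 - β| ≤ K) :
    |(1 - ε * β) / (1 - ε) - 1 - ε * (1 - β)| ≤ 2 * K * ε ^ 2 := by
  have hε₁ : 0 < 1 - ε := by linarith
  have hid : (1 - ε * β) / (1 - ε) - 1 - ε * (1 - β) = ε ^ 2 * (1 - β) / (1 - ε) := by
    field_simp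
    ring
  rw [hid, abs_div, abs_mul, abs_of_pos hε₁, abs_of_nonneg (sq_nonneg ε), div_le_iff₀ hε₁]
  have hK : 0 ≤ K := (abs_nonneg _).trans hβ
  nlinarith [mul_le_mul_of_nonneg_left hβ (sq_nonneg ε),
    mul_nonneg (mul_nonneg hK (sq_nonneg ε)) (by linarith : (0 : ℝ) ≤ 1 - 2 * ε)]

variable {α : Type*} [MeasurableSpace α]

def IsEquilibrium (μ : Measure α) (ε₁ ε₃ : ℝ) (b r : α → ℝ) : Prop :=
  Measurable r ∧
    (∀ᵐ x ∂μ, 0 < r x ∧ r x < (1 - ε₃ * b x) / ε₁) ∧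
    (∃ χ : ℝ, ∀ᵐ x ∂μ,
      Real.log (r x / (1 - ε₁ * r x - ε₃ * b x)) + ε₁ * r x / (1 - ε₁ * r x - ε₃ * b x) = χ) ∧
    ∫ x, r x ∂μ = 1

noncomputable def equilibriumDensity (ε₃ : ℝ) (b : α → ℝ) (x : α) : ℝ := (1 - ε₃ * b x) / (1 - ε₃)

variable {μ : Measure α} {ε₁ ε₃ χ : ℝ} {b r : α → ℝ}

lemma exists_ae_eq_const_mul [NeZero μ] (hε₁ : 0 < ε₁)
    (hbd : ∀ᵐ x ∂μ, 0 < r x ∧ r x < (1 - ε₃ * b x) / ε₁)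
    (hχ : ∀ᵐ x ∂μ,
      Real.log (r x / (1 - ε₁ * r x - ε₃ * b x)) + ε₁ * r x / (1 - ε₁ * r x - ε₃ * b x) = χ) :
    ∃ κ, r =ᵐ[μ] fun x => κ * (1 - ε₃ * b x) := by
  set q := fun x => r x / (1 - ε₁ * r x - ε₃ * b x)
  have key : ∀ᵐ x ∂μ, (0 < q x ∧ r x = q x / (1 + ε₁ * q x) * (1 - ε₃ * b x)) ∧
      Real.log (q x) + ε₁ * q x = χ := by
    filter_upwards [hbd, hχ] with x ⟨hr, hrb⟩ hx
    exact ⟨pos_and_eq_div_one_add_mul_mul_of_div_eq hε₁ hr hrb rfl, by rw [← hx, mul_div_assoc]⟩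
  obtain ⟨x₀, ⟨hq₀, -⟩, hχ₀⟩ := key.exists
  refine ⟨q x₀ / (1 + ε₁ * q x₀), ?_⟩
  filter_upwards [key] with x ⟨⟨hq, hr⟩, hχx⟩
  rwa [(strictMonoOn_log_add_mul hε₁.le).injOn hq hq₀ (hχx.trans hχ₀.symm)] at hr

variable [IsProbabilityMeasure μ]

lemma integral_one_sub_mul (hbi : Integrable b μ) (hbint : ∫ x, b x ∂μ = 1) :
    ∫ x, (1 - ε₃ * b x) ∂μ = 1 - ε₃ := by
  rw [integral_sub (integrable_const 1) (hbi.const_mul ε₃), integral_const_mul, hbint]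
  simp

lemma IsEquilibrium.ae_eq_equilibriumDensity (h : IsEquilibrium μ ε₁ ε₃ b r) (hε₁ : 0 < ε₁)
    (hbi : Integrable b μ) (hbint : ∫ x, b x ∂μ = 1) :
    r =ᵐ[μ] equilibriumDensity ε₃ b := by
  obtain ⟨-, hbd, ⟨χ, hχ⟩, hint⟩ := h
  obtain ⟨κ, hκ⟩ := exists_ae_eq_const_mul hε₁ hbd hχ
  have hκ₁ : κ * (1 - ε₃) = 1 :=
    calc κ * (1 - ε₃) = ∫ x, κ * (1 - ε₃ * b x) ∂μ := by
          rw [integral_const_mul, integral_one_sub_mul hbi hbint]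
      _ = ∫ x, r x ∂μ := integral_congr_ae hκ.symm
      _ = 1 := hint
  have hε₃ : 1 - ε₃ ≠ 0 := right_ne_zero_of_mul_eq_one hκ₁
  filter_upwards [hκ] with x hx
  rw [hx, equilibriumDensity, eq_div_iff hε₃]
  linear_combination (1 - ε₃ * b x) * hκ₁

lemma isEquilibrium_equilibriumDensity (hb : Measurable b) (hbi : Integrable b μ)
    (hbint : ∫ x, b x ∂μ = 1) (hε₁ : 0 < ε₁) (hε : ε₁ + ε₃ < 1) (hε₃b : ∀ x, ε₃ * b x < 1) :
    IsEquilibrium μ ε₁ ε₃ b (equilibriumDensity ε₃ b) := by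
  have hε₃ : 0 < 1 - ε₃ := by linarith
  have hε₁₃ : 0 < 1 - ε₁ - ε₃ := by linarith
  have hratio : ∀ x, equilibriumDensity ε₃ b x
      / (1 - ε₁ * equilibriumDensity ε₃ b x - ε₃ * b x) = 1 / (1 - ε₁ - ε₃) := by
    intro x
    have hb₃ : 0 < 1 - ε₃ * b x := by linarith [hε₃b x]
    have hs : 1 - ε₁ * equilibriumDensity ε₃ b x - ε₃ * b x
        = (1 - ε₃ * b x) * (1 - ε₁ - ε₃) / (1 - ε₃) := by
      rw [equilibriumDensity]
      field_simp
      ring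
    rw [hs, equilibriumDensity]
    field_simp
  refine ⟨((measurable_const.sub (hb.const_mul ε₃)).div_const _), ?_, ?_, ?_⟩
  · refine Filter.Eventually.of_forall fun x => ⟨div_pos (by linarith [hε₃b x]) hε₃, ?_⟩
    exact div_lt_div_of_pos_left (by linarith [hε₃b x]) hε₁ (by linarith)
  · exact ⟨Real.log (1 / (1 - ε₁ - ε₃)) + ε₁ * (1 / (1 - ε₁ - ε₃)),
      Filter.Eventually.of_forall fun x => by rw [mul_div_assoc, hratio]⟩
  · change ∫ x, (1 - ε₃ * b x) / (1 - ε₃) ∂μ = 1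
    rw [integral_div, integral_one_sub_mul hbi hbint, div_self hε₃.ne']

end EntropyPair2

open EntropyPair2

theorem equilibrium_pair2_expansion_general
    (d : ℕ) (Ω : Set (EuclideanSpace ℝ (Fin d)))
    (hΩvol : volume Ω = 1)
    (B : ℝ) (b : EuclideanSpace ℝ (Fin d) → ℝ) (hbmeas : Measurable b)
    (hb0 : ∀ x, 0 ≤ b x) (hbB : ∀ x, b x ≤ B)
    (hbint : ∫ x, b x ∂(volume.restrict Ω) = 1) :
    ∃ ε₀ > (0 : ℝ), ∃ C > (0 : ℝ),
      ∀ ε₁ ε₃ : ℝ, 0 < ε₁ → ε₁ ≤ ε₀ → 0 < ε₃ → ε₃ ≤ ε₀ →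
        (∃ r : EuclideanSpace ℝ (Fin d) → ℝ, Measurable r ∧
          (∀ᵐ x ∂(volume.restrict Ω), 0 < r x ∧ r x < (1 - ε₃ * b x) / ε₁) ∧
          (∃ χ : ℝ, ∀ᵐ x ∂(volume.restrict Ω),
            Real.log (r x / (1 - ε₁ * r x - ε₃ * b x))
              + ε₁ * r x / (1 - ε₁ * r x - ε₃ * b x) = χ) ∧
          ∫ x, r x ∂(volume.restrict Ω) = 1) ∧
        (∀ r₁ r₂ : EuclideanSpace ℝ (Fin d) → ℝ,
          (Measurable r₁ ∧
            (∀ᵐ x ∂(volume.restrict Ω), 0 < r₁ x ∧ r₁ x < (1 - ε₃ * b x) / ε₁) ∧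
            (∃ χ : ℝ, ∀ᵐ x ∂(volume.restrict Ω),
              Real.log (r₁ x / (1 - ε₁ * r₁ x - ε₃ * b x))
                + ε₁ * r₁ x / (1 - ε₁ * r₁ x - ε₃ * b x) = χ) ∧
            ∫ x, r₁ x ∂(volume.restrict Ω) = 1) →
          (Measurable r₂ ∧
            (∀ᵐ x ∂(volume.restrict Ω), 0 < r₂ x ∧ r₂ x < (1 - ε₃ * b x) / ε₁) ∧
            (∃ χ : ℝ, ∀ᵐ x ∂(volume.restrict Ω),
              Real.log (r₂ x / (1 - ε₁ * r₂ x - ε₃ * b x))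
                + ε₁ * r₂ x / (1 - ε₁ * r₂ x - ε₃ * b x) = χ) ∧
            ∫ x, r₂ x ∂(volume.restrict Ω) = 1) →
          r₁ =ᵐ[volume.restrict Ω] r₂) ∧
        (∀ r : EuclideanSpace ℝ (Fin d) → ℝ,
          (Measurable r ∧
            (∀ᵐ x ∂(volume.restrict Ω), 0 < r x ∧ r x < (1 - ε₃ * b x) / ε₁) ∧
            (∃ χ : ℝ, ∀ᵐ x ∂(volume.restrict Ω),
              Real.log (r x / (1 - ε₁ * r x - ε₃ * b x))
                + ε₁ * r x / (1 - ε₁ * r x - ε₃ * b x) = χ) ∧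
            ∫ x, r x ∂(volume.restrict Ω) = 1) →
          ∀ᵐ x ∂(volume.restrict Ω),
            |r x - 1 - ε₃ * (1 - b x)| ≤ C * (ε₁ + ε₃) ^ 2) := by
  have hB : 0 ≤ B := (hb0 0).trans (hbB 0)
  have : IsProbabilityMeasure (volume.restrict Ω) := ⟨by simp [hΩvol]⟩
  have hbi : Integrable b (volume.restrict Ω) :=
    .of_bound hbmeas.aestronglyMeasurable B (.of_forall fun x => by
      rw [Real.norm_of_nonneg (hb0 x)]; exact hbB x)
  refine ⟨1 / (4 * (B + 1)), by positivity, 2 * (B + 1), by positivity,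
    fun ε₁ ε₃ hε₁ hε₁₀ hε₃ hε₃₀ => ?_⟩
  rw [le_div_iff₀ (by positivity)] at hε₁₀ hε₃₀
  have hε₃b : ∀ x, ε₃ * b x < 1 := fun x => by nlinarith [hb0 x, hbB x]
  have huniq : ∀ r, IsEquilibrium (volume.restrict Ω) ε₁ ε₃ b r →
      r =ᵐ[volume.restrict Ω] equilibriumDensity ε₃ b :=
    fun r hr => hr.ae_eq_equilibriumDensity hε₁ hbi hbint
  refine ⟨⟨_, isEquilibrium_equilibriumDensity hbmeas hbi hbint hε₁ (by nlinarith) hε₃b⟩,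
    fun r₁ r₂ h₁ h₂ => (huniq r₁ h₁).trans (huniq r₂ h₂).symm, fun r hr => ?_⟩
  filter_upwards [huniq r hr] with x hx
  have hb₁ : |1 - b x| ≤ B + 1 := abs_le.mpr ⟨by linarith [hbB x], by linarith [hb0 x]⟩
  rw [hx]
  refine (abs_div_one_sub_sub_le (by nlinarith) hb₁).trans ?_
  gcongr
  linarith

/-- Rigorous form of the paper's claim (Section 2.1, via (2.12)) for the equilibrium of
the second entropy–mobility pair: for small ε₁, ε₃ there is an a.e.-unique admissible
normalized density r whose entropy variable u₂ is a.e. constant, and it satisfies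
r = 1 + ε₃(1 - b) + O((ε₁ + ε₃)²) uniformly a.e. -/
theorem equilibrium_pair2_expansion
    (d : ℕ) (Ω : Set (EuclideanSpace ℝ (Fin d))) (hΩ : MeasurableSet Ω)
    (hΩvol : volume Ω = 1)
    (B : ℝ) (b : EuclideanSpace ℝ (Fin d) → ℝ) (hbmeas : Measurable b)
    (hb0 : ∀ x, 0 ≤ b x) (hbB : ∀ x, b x ≤ B)
    (hbint : ∫ x, b x ∂(volume.restrict Ω) = 1) :
    ∃ ε₀ > (0 : ℝ), ∃ C > (0 : ℝ),
      ∀ ε₁ ε₃ : ℝ, 0 < ε₁ → ε₁ ≤ ε₀ → 0 < ε₃ → ε₃ ≤ ε₀ →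
        (∃ r : EuclideanSpace ℝ (Fin d) → ℝ, Measurable r ∧
          (∀ᵐ x ∂(volume.restrict Ω), 0 < r x ∧ r x < (1 - ε₃ * b x) / ε₁) ∧
          (∃ χ : ℝ, ∀ᵐ x ∂(volume.restrict Ω),
            Real.log (r x / (1 - ε₁ * r x - ε₃ * b x))
              + ε₁ * r x / (1 - ε₁ * r x - ε₃ * b x) = χ) ∧
          ∫ x, r x ∂(volume.restrict Ω) = 1) ∧
        (∀ r₁ r₂ : EuclideanSpace ℝ (Fin d) → ℝ,
          (Measurable r₁ ∧
            (∀ᵐ x ∂(volume.restrict Ω), 0 < r₁ x ∧ r₁ x < (1 - ε₃ * b x) / ε₁) ∧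
            (∃ χ : ℝ, ∀ᵐ x ∂(volume.restrict Ω),
              Real.log (r₁ x / (1 - ε₁ * r₁ x - ε₃ * b x))
                + ε₁ * r₁ x / (1 - ε₁ * r₁ x - ε₃ * b x) = χ) ∧
            ∫ x, r₁ x ∂(volume.restrict Ω) = 1) →
          (Measurable r₂ ∧
            (∀ᵐ x ∂(volume.restrict Ω), 0 < r₂ x ∧ r₂ x < (1 - ε₃ * b x) / ε₁) ∧
            (∃ χ : ℝ, ∀ᵐ x ∂(volume.restrict Ω),
              Real.log (r₂ x / (1 - ε₁ * r₂ x - ε₃ * b x))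
                + ε₁ * r₂ x / (1 - ε₁ * r₂ x - ε₃ * b x) = χ) ∧
            ∫ x, r₂ x ∂(volume.restrict Ω) = 1) →
          r₁ =ᵐ[volume.restrict Ω] r₂) ∧
        (∀ r : EuclideanSpace ℝ (Fin d) → ℝ,
          (Measurable r ∧
            (∀ᵐ x ∂(volume.restrict Ω), 0 < r x ∧ r x < (1 - ε₃ * b x) / ε₁) ∧
            (∃ χ : ℝ, ∀ᵐ x ∂(volume.restrict Ω),
              Real.log (r x / (1 - ε₁ * r x - ε₃ * b x))
                + ε₁ * r x / (1 - ε₁ * r x - ε₃ * b x) = χ) ∧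
            ∫ x, r x ∂(volume.restrict Ω) = 1) →
          ∀ᵐ x ∂(volume.restrict Ω),
            |r x - 1 - ε₃ * (1 - b x)| ≤ C * (ε₁ + ε₃) ^ 2) :=
  equilibrium_pair2_expansion_general d Ω hΩvol B b hbmeas hb0 hbB hbint
end
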